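/- arXiv:2604.08843 — 11 statements merged into one kernel-verified Lean document; each statement's English description precedes it below -/
import Mathlib

section
/- Let C be an [n,k] linear code over F_q with generator matrix G. Then the dimension ℓ of the Euclidean hull of C satisfies ℓ = k − rank(G Gᵀ), where Gᵀ is the transpose of G. -/
open Matrix

/-- The Euclidean dual of a code `C` in `F^ι`: all vectors orthogonal (for the
Euclidean inner product `⟨u,v⟩_E = ∑ i, u i * v i`) to every codeword of `C`. -/
def dualE {F : Type*} [Field F] {ι : Type*} [Fintype ι]
    (C : Submodule F (ι → F)) : Submodule F (ι → F) where
  carrier := {v | ∀ u ∈ C, u ⬝ᵥ v = 0}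
  add_mem' := fun {a b} ha hb u hu => by
    rw [dotProduct_add, ha u hu, hb u hu, add_zero]
  zero_mem' := fun u _ => dotProduct_zero u
  smul_mem' := fun c a ha u hu => by
    rw [dotProduct_smul, ha u hu, smul_zero]

/-- The Euclidean hull of a code: `Hull_E(C) = C ⊓ C^{⊥_E}`. -/
def hullE {F : Type*} [Field F] {ι : Type*} [Fintype ι]
    (C : Submodule F (ι → F)) : Submodule F (ι → F) :=
  C ⊓ dualE C

/-- `G` is a generator matrix of the code `C`: its rows form a basis of `C`. -/
def IsGenMat {F : Type*} [Field F] {κ ι : Type*}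
    (C : Submodule F (ι → F)) (G : Matrix κ ι F) : Prop :=
  LinearIndependent F (fun i => G i) ∧ Submodule.span F (Set.range fun i => G i) = C

/-- If `C` is an `[n,k]` linear code over a finite field with
generator matrix `G`, then `dim Hull_E(C) = k - rank (G * Gᵀ)`. -/
theorem finrank_hullE_eq_sub_rank {F : Type*} [Field F] [Fintype F] {n k : ℕ}
    (C : Submodule F (Fin n → F)) (hk : Module.finrank F C = k)
    (G : Matrix (Fin k) (Fin n) F) (hG : IsGenMat C G) :
    Module.finrank F (hullE C) = k - (G * Gᵀ).rank := by
  obtain ⟨hind, hspan⟩ := hG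
  set f := G.vecMulLinear with hf
  have hfinj : Function.Injective f := by
    rw [hf, show (⇑G.vecMulLinear : _) = G.vecMul from rfl] at *
    exact Matrix.vecMul_injective_iff.mpr hind
  have hrange : LinearMap.range f = C := by
    rw [hf, range_vecMulLinear]; exact hspan
  have key : ∀ x : Fin k → F, (G * Gᵀ) *ᵥ x = G *ᵥ (f x) := by
    intro x
    rw [← Matrix.mulVec_mulVec]
    congr 1
    rw [Matrix.mulVec_transpose]
    rfl
  have hmap : hullE C = Submodule.map f (LinearMap.ker (G * Gᵀ).mulVecLin) := by
    ext v
    constructor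
    · rintro ⟨hvC, hvD⟩
      obtain ⟨x, rfl⟩ := hrange ▸ hvC
      refine ⟨x, ?_, rfl⟩
      show (G * Gᵀ).mulVecLin x = 0
      rw [Matrix.mulVecLin_apply, key x]
      ext i
      have hGi : G i ∈ C := by
        rw [← hspan]; exact Submodule.subset_span ⟨i, rfl⟩
      exact hvD (G i) hGi
    · rintro ⟨x, hx, rfl⟩
      have hx : (G * Gᵀ) *ᵥ x = 0 := hx
      refine ⟨hrange ▸ LinearMap.mem_range_self f x, ?_⟩
      intro u hu
      obtain ⟨y, rfl⟩ := hrange ▸ hu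
      have : f y ⬝ᵥ f x = y ⬝ᵥ ((G * Gᵀ) *ᵥ x) := by
        rw [key x, Matrix.dotProduct_mulVec]
        rfl
      rw [this, hx, dotProduct_zero]
  have h1 : Module.finrank F (hullE C) =
      Module.finrank F (LinearMap.ker (G * Gᵀ).mulVecLin) := by
    rw [hmap]
    exact (LinearEquiv.finrank_eq
      (Submodule.equivMapOfInjective f hfinj (LinearMap.ker (G * Gᵀ).mulVecLin))).symm
  have h2 := LinearMap.finrank_range_add_finrank_ker (G * Gᵀ).mulVecLin
  have h3 : Module.finrank F (Fin k → F) = k := by simp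
  have h4 : (G * Gᵀ).rank = Module.finrank F (LinearMap.range (G * Gᵀ).mulVecLin) := rfl
  omega
end

section
/- For every [n,k] linear code C over F_q and every integer t with 0 ≤ t ≤ k, there exists a t-dimensional Euclidean hull embedding of C. In particular, if G is a generator matrix of C, p = char F_q, and D is the k×(k−t) matrix [I_{k−t}; O], then the [np+k−t, k] code generated by [G, G, …, G (p copies), D] is such an embedding. -/
open Matrix

/-- `Ct` (a code of length `n + |ι|`) is a `t`-dimensional Euclidean hull embedding of the
`[n,k]` code `C`: `dim Hull_E(Ct) = t` and `Ct` has a generator matrix `[G | D]` where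
`G` is a generator matrix of `C`. -/
def IsHullEmbE {F : Type*} [Field F] {n : ℕ} (k : ℕ) {ι : Type*} [Fintype ι]
    (C : Submodule F (Fin n → F)) (Ct : Submodule F ((Fin n ⊕ ι) → F)) (t : ℕ) : Prop :=
  Module.finrank F (hullE Ct) = t ∧
  ∃ (G : Matrix (Fin k) (Fin n) F) (D : Matrix (Fin k) ι F),
    IsGenMat C G ∧ IsGenMat Ct (Matrix.fromCols G D)

lemma aux_dot_sum {F : Type*} [Field F] {ι κ : Type*} [Fintype ι] [Fintype κ]
    (u : ι → F) (f : κ → ι → F) : u ⬝ᵥ (∑ b, f b) = ∑ b, u ⬝ᵥ f b := by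
  simp only [dotProduct, Finset.sum_apply, Finset.mul_sum]
  exact Finset.sum_comm

lemma aux_hull {F : Type*} [Field F] {n k t : ℕ}
    (C : Submodule F (Fin n → F)) (ht : t ≤ k) {ι : Type*} [Fintype ι]
    (G : Matrix (Fin k) (Fin n) F) (hG : IsGenMat C G)
    (D : Matrix (Fin k) ι F)
    (H : ∀ a b, G a ⬝ᵥ G b + D a ⬝ᵥ D b =
      if a = b ∧ (a : ℕ) < k - t then 1 else 0) :
    IsHullEmbE k C (Submodule.span F (Set.range fun i => Matrix.fromCols G D i)) t := by
  set M : Matrix (Fin k) (Fin n ⊕ ι) F := Matrix.fromCols G D with hM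
  set Ct := Submodule.span F (Set.range fun i => M i) with hCt
  have gram : ∀ a b, M a ⬝ᵥ M b = if a = b ∧ (a : ℕ) < k - t then 1 else 0 := by
    intro a b
    have h1 : M a ⬝ᵥ M b = G a ⬝ᵥ G b + D a ⬝ᵥ D b :=
      sumElim_dotProduct_sumElim _ _ _ _
    rw [h1, H a b]
  have hMli : LinearIndependent F (fun i => M i) := by
    apply LinearIndependent.of_comp (LinearMap.funLeft F F Sum.inl)
    have : (⇑(LinearMap.funLeft F F Sum.inl)) ∘ (fun i => M i) = fun i => G i := by
      funext i; rfl
    rw [this]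
    exact hG.1
  have hGen : IsGenMat Ct M := ⟨hMli, rfl⟩
  have hkt : k - t + t = k := Nat.sub_add_cancel ht
  let e : Fin (k - t) ⊕ Fin t ≃ Fin k := finSumFinEquiv.trans (finCongr hkt)
  have hval_inl : ∀ i : Fin (k - t), ((e (Sum.inl i)) : ℕ) = (i : ℕ) := by
    intro i; simp [e]
  have hval_inr : ∀ i : Fin t, ((e (Sum.inr i)) : ℕ) = k - t + (i : ℕ) := by
    intro i; simp [e]
  set f : Fin t → (Fin n ⊕ ι) → F := fun i => M (e (Sum.inr i)) with hf
  set S := Submodule.span F (Set.range f) with hS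
  have hSle : S ≤ Ct := Submodule.span_le.mpr (by
    rintro _ ⟨i, rfl⟩; exact Submodule.subset_span ⟨e (Sum.inr i), rfl⟩)
  have hdot : ∀ (a : Fin k) (x : Fin k → F),
      M a ⬝ᵥ (∑ b, x b • M b) = if (a : ℕ) < k - t then x a else 0 := by
    intro a x
    rw [aux_dot_sum]
    have hterm : ∀ b, M a ⬝ᵥ (x b • M b)
        = x b * (if a = b ∧ (a : ℕ) < k - t then 1 else 0) := by
      intro b
      rw [dotProduct_smul, gram, smul_eq_mul]
    simp_rw [hterm]
    by_cases h : (a : ℕ) < k - t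
    · simp only [h, and_true, mul_ite, mul_one, mul_zero]
      simp [Finset.sum_ite_eq]
    · simp [h]
  have hSdual : S ≤ dualE Ct := by
    rw [Submodule.span_le]
    rintro _ ⟨i, rfl⟩
    intro u hu
    induction hu using Submodule.span_induction with
    | mem u hu =>
        obtain ⟨a, rfl⟩ := hu
        rw [gram, if_neg]
        rintro ⟨rfl, hlt⟩
        rw [hval_inr] at hlt
        omega
    | zero => exact zero_dotProduct _
    | add u v _ _ hu hv => rw [add_dotProduct, hu, hv, add_zero]
    | smul c u _ hu => rw [smul_dotProduct, hu, smul_zero]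
  have hhull : hullE Ct = S := by
    apply le_antisymm
    · rintro v hv
      obtain ⟨hvC, hvD⟩ := Submodule.mem_inf.mp hv
      obtain ⟨x, rfl⟩ := (Submodule.mem_span_range_iff_exists_fun F).mp hvC
      have hx : ∀ a : Fin k, (a : ℕ) < k - t → x a = 0 := by
        intro a ha
        have h0 : M a ⬝ᵥ (∑ b, x b • M b) = 0 :=
          hvD (M a) (Submodule.subset_span ⟨a, rfl⟩)
        rw [hdot a x, if_pos ha] at h0
        exact h0
      rw [hS, Submodule.mem_span_range_iff_exists_fun]
      refine ⟨fun i => x (e (Sum.inr i)), ?_⟩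
      rw [← Equiv.sum_comp e (fun b => x b • M b), Fintype.sum_sum_type]
      have hzero : ∑ i : Fin (k - t), x (e (Sum.inl i)) • M (e (Sum.inl i)) = 0 := by
        apply Finset.sum_eq_zero
        intro i _
        rw [hx _ (by rw [hval_inl]; exact i.isLt), zero_smul]
      rw [hzero, zero_add]
    · exact le_inf hSle hSdual
  have hli : LinearIndependent F f :=
    hMli.comp (fun i => e (Sum.inr i))
      (fun i j h => Sum.inr_injective (e.injective h))
  refine ⟨?_, G, D, hG, hGen⟩
  rw [hhull, finrank_span_eq_card hli, Fintype.card_fin]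

/-- For every `[n,k]` code `C` over `F_q` and `0 ≤ t ≤ k` there exists a
`t`-dimensional Euclidean hull embedding of `C`.  In particular, if `G` is a generator
matrix of `C`, `p = char F_q` and `D = [I_{k-t}; O]`, then the `[np + k - t, k]` code
generated by `[G, G, …, G (p copies), D]` is such an embedding. -/
theorem exists_hullE_embedding {F : Type*} [Field F] [Fintype F] {n k t : ℕ}
    (C : Submodule F (Fin n → F)) (hk : Module.finrank F C = k) (ht : t ≤ k)
    (G : Matrix (Fin k) (Fin n) F) (hG : IsGenMat C G)
    (p : ℕ) (hp : p = ringChar F) :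
    (∃ (s : ℕ) (Ct : Submodule F ((Fin n ⊕ Fin s) → F)), IsHullEmbE k C Ct t) ∧
    IsHullEmbE k C
      (Submodule.span F (Set.range fun i =>
        Matrix.fromCols G
          (Matrix.fromCols
            (Matrix.of fun (a : Fin k) (j : Fin (p - 1) × Fin n) => G a j.2)
            (Matrix.of fun (a : Fin k) (j : Fin (k - t)) =>
              if (a : ℕ) = (j : ℕ) then (1 : F) else 0)) i)) t := by
  have hp0 : p ≠ 0 := by rw [hp]; exact CharP.ringChar_ne_zero_of_finite F
  have hpF : (p : F) = 0 := by rw [hp]; exact CharP.cast_eq_zero F (ringChar F)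
  set G2 : Matrix (Fin k) (Fin (p - 1) × Fin n) F :=
    Matrix.of fun (a : Fin k) (j : Fin (p - 1) × Fin n) => G a j.2 with hG2
  set D0 : Matrix (Fin k) (Fin (k - t)) F :=
    Matrix.of fun (a : Fin k) (j : Fin (k - t)) =>
      if (a : ℕ) = (j : ℕ) then (1 : F) else 0 with hD0
  set Dbig : Matrix (Fin k) ((Fin (p - 1) × Fin n) ⊕ Fin (k - t)) F :=
    Matrix.fromCols G2 D0 with hDbig
  have hD0dot : ∀ a b : Fin k,
      D0 a ⬝ᵥ D0 b = if a = b ∧ (a : ℕ) < k - t then 1 else 0 := by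
    intro a b
    unfold dotProduct
    by_cases h : a = b ∧ (a : ℕ) < k - t
    · obtain ⟨rfl, h2⟩ := h
      rw [if_pos ⟨rfl, h2⟩]
      rw [Finset.sum_eq_single (⟨(a : ℕ), h2⟩ : Fin (k - t))]
      · simp [hD0]
      · intro j _ hj
        simp only [hD0, Matrix.of_apply, ite_mul, one_mul, zero_mul]
        rw [if_neg]
        intro h1
        exact hj (Fin.ext h1.symm)
      · intro h; exact absurd (Finset.mem_univ _) h
    · rw [if_neg h]
      apply Finset.sum_eq_zero
      intro j _
      simp only [hD0, Matrix.of_apply, ite_mul, one_mul, zero_mul, mul_ite, mul_one, mul_zero]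
      split_ifs with h1 h2 <;> try rfl
      have hj := j.isLt
      exact absurd ⟨Fin.ext (by omega), by omega⟩ h
  have Hbig : ∀ a b : Fin k, G a ⬝ᵥ G b + Dbig a ⬝ᵥ Dbig b =
      if a = b ∧ (a : ℕ) < k - t then 1 else 0 := by
    intro a b
    have h1 : Dbig a ⬝ᵥ Dbig b = G2 a ⬝ᵥ G2 b + D0 a ⬝ᵥ D0 b :=
      sumElim_dotProduct_sumElim _ _ _ _
    have h2 : G2 a ⬝ᵥ G2 b = ((p - 1 : ℕ) : F) * (G a ⬝ᵥ G b) := by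
      unfold dotProduct
      rw [Fintype.sum_prod_type]
      simp [hG2, Finset.sum_const, nsmul_eq_mul]
    have h3 : G a ⬝ᵥ G b + ((p - 1 : ℕ) : F) * (G a ⬝ᵥ G b) = 0 := by
      have : (1 : F) + ((p - 1 : ℕ) : F) = (p : F) := by
        rw [← Nat.cast_one, ← Nat.cast_add]
        congr 1
        omega
      calc G a ⬝ᵥ G b + ((p - 1 : ℕ) : F) * (G a ⬝ᵥ G b)
          = ((1 : F) + ((p - 1 : ℕ) : F)) * (G a ⬝ᵥ G b) := by ring
        _ = 0 := by rw [this, hpF, zero_mul]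
    rw [h1, ← add_assoc, h2, h3, zero_add, hD0dot]
  constructor
  · refine ⟨(p - 1) * n + (k - t), ?_⟩
    let eq : ((Fin (p - 1) × Fin n) ⊕ Fin (k - t)) ≃ Fin ((p - 1) * n + (k - t)) :=
      (Equiv.sumCongr (finProdFinEquiv.symm.symm) (Equiv.refl _)).trans finSumFinEquiv
    set D' : Matrix (Fin k) (Fin ((p - 1) * n + (k - t))) F :=
      Matrix.of fun a j => Dbig a (eq.symm j) with hD'
    have H' : ∀ a b : Fin k, G a ⬝ᵥ G b + D' a ⬝ᵥ D' b =
        if a = b ∧ (a : ℕ) < k - t then 1 else 0 := by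
      intro a b
      have : D' a ⬝ᵥ D' b = Dbig a ⬝ᵥ Dbig b := by
        unfold dotProduct
        exact Equiv.sum_comp eq.symm (fun i => Dbig a i * Dbig b i)
      rw [this]
      exact Hbig a b
    exact ⟨_, aux_hull C ht G hG D' H'⟩
  · exact aux_hull C ht G hG Dbig Hbig
end

section
/- Let q be a prime power. For every [n,k] linear code C over F_{q^2} and every integer t with 0 ≤ t ≤ k, there exists a t-dimensional Hermitian hull embedding of C. -/
open Matrix

/-- The Hermitian dual of a code `C` in `F^ι`, where `F` has characteristic `p` and the
conjugation is `x ↦ x ^ p ^ m` (so `q = p ^ m`). -/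
def dualH {F : Type*} [Field F] (p m : ℕ) [Fact p.Prime] [CharP F p]
    {ι : Type*} [Fintype ι] (C : Submodule F (ι → F)) : Submodule F (ι → F) where
  carrier := {v | ∀ u ∈ C, ∑ i, u i * v i ^ p ^ m = 0}
  add_mem' := fun {a b} ha hb u hu => by
    have key : ∀ i, u i * (a + b) i ^ p ^ m
        = u i * a i ^ p ^ m + u i * b i ^ p ^ m := by
      intro i
      have h : (a i + b i) ^ p ^ m = a i ^ p ^ m + b i ^ p ^ m := by
        simpa [iterateFrobenius_def] using map_add (iterateFrobenius F p m) (a i) (b i)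
      simp [h, mul_add]
    rw [Finset.sum_congr rfl fun i _ => key i, Finset.sum_add_distrib, ha u hu, hb u hu,
      add_zero]
  zero_mem' := fun u _ => by
    have h0 : (0 : F) ^ p ^ m = 0 :=
      zero_pow (pow_ne_zero m (Nat.Prime.ne_zero Fact.out))
    simp [h0]
  smul_mem' := fun c a ha u hu => by
    have key : ∀ i, u i * (c • a) i ^ p ^ m = c ^ p ^ m * (u i * a i ^ p ^ m) := by
      intro i
      simp only [Pi.smul_apply, smul_eq_mul, mul_pow]
      ring
    rw [Finset.sum_congr rfl fun i _ => key i, ← Finset.mul_sum, ha u hu, mul_zero]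

/-- The Hermitian hull of a code: `Hull_H(C) = C ⊓ C^{⊥_H}`. -/
def hullH {F : Type*} [Field F] (p m : ℕ) [Fact p.Prime] [CharP F p]
    {ι : Type*} [Fintype ι] (C : Submodule F (ι → F)) : Submodule F (ι → F) :=
  C ⊓ dualH p m C

/-- `Ct` (a code of length `n + |ι|`) is a `t`-dimensional Hermitian hull embedding of the
`[n,k]` code `C`: `dim Hull_H(Ct) = t` and `Ct` has a generator matrix `[G | D]` where
`G` is a generator matrix of `C`. -/
def IsHullEmbH {F : Type*} [Field F] (p m : ℕ) [Fact p.Prime] [CharP F p]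
    {n : ℕ} (k : ℕ) {ι : Type*} [Fintype ι]
    (C : Submodule F (Fin n → F)) (Ct : Submodule F ((Fin n ⊕ ι) → F)) (t : ℕ) : Prop :=
  Module.finrank F (hullH p m Ct) = t ∧
  ∃ (G : Matrix (Fin k) (Fin n) F) (D : Matrix (Fin k) ι F),
    IsGenMat C G ∧ IsGenMat Ct (Matrix.fromCols G D)

lemma norm_surj {F : Type*} [Field F] [Fintype F] [DecidableEq F] (q : ℕ) (hq : 2 ≤ q)
    (hcard : Fintype.card F = q ^ 2) (d : F) (hd : d ^ q = d) :
    ∃ α : F, α * α ^ q = d := by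
  rcases eq_or_ne d 0 with rfl | hd0
  · exact ⟨0, by simp [zero_pow (by omega : q ≠ 0)]⟩
  obtain ⟨g, hg⟩ := IsCyclic.exists_generator (α := Fˣ)
  set u : Fˣ := Units.mk0 d hd0 with hu
  obtain ⟨a, ha⟩ := mem_powers_iff_mem_zpowers.2 (hg u)
  simp only [] at ha
  have hd1 : d ^ (q - 1) = 1 := by
    have : d ^ (q - 1) * d = d := by
      rw [← pow_succ]
      simpa [Nat.sub_add_cancel (by omega : 1 ≤ q)] using hd
    field_simp at this
    exact this
  have hu1 : u ^ (q - 1) = 1 := by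
    ext
    push_cast
    exact hd1
  have hord : orderOf g = q ^ 2 - 1 := by
    rw [orderOf_eq_card_of_forall_mem_zpowers hg, Nat.card_eq_fintype_card,
      Fintype.card_units, hcard]
  have hdvd : (q - 1) * (q + 1) ∣ a * (q - 1) := by
    have h1 : g ^ (a * (q - 1)) = 1 := by rw [pow_mul, ha, hu1]
    have h2 := orderOf_dvd_of_pow_eq_one h1
    rw [hord] at h2
    have hsq : q ^ 2 - 1 = (q - 1) * (q + 1) := by
      obtain ⟨c, rfl⟩ := Nat.exists_eq_add_of_le hq
      have h1 : (2 + c) ^ 2 = c * c + 4 * c + 4 := by ring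
      have h2 : (2 + c - 1) * (2 + c + 1) = c * c + 4 * c + 3 := by
        have h3 : 2 + c - 1 = c + 1 := by omega
        rw [h3]; ring
      omega
    rwa [hsq] at h2
  have hdvd2 : (q + 1) ∣ a := by
    rw [mul_comm a (q - 1)] at hdvd
    exact (Nat.mul_dvd_mul_iff_left (by omega : 0 < q - 1)).1 hdvd
  obtain ⟨b, rfl⟩ := hdvd2
  refine ⟨((g ^ b : Fˣ) : F), ?_⟩
  have key : ((g ^ b : Fˣ) : F) * ((g ^ b : Fˣ) : F) ^ q = ((g ^ ((q + 1) * b) : Fˣ) : F) := by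
    push_cast
    rw [← pow_succ', ← pow_mul]
    ring_nf
  rw [key, ha, hu]
  simp

lemma exists_gram {F : Type*} [Field F] [Fintype F] [DecidableEq F]
    (p m : ℕ) [Fact p.Prime] [CharP F p] (hq : 2 ≤ p ^ m)
    (hcard : Fintype.card F = (p ^ m) ^ 2)
    {k : ℕ} (N : Matrix (Fin k) (Fin k) F) (hN : ∀ a b, N a b ^ p ^ m = N b a) :
    ∃ D : Matrix (Fin k) (Fin k ⊕ Fin k × Fin k) F,
      ∀ a b, ∑ c, D a c * D b c ^ p ^ m = N a b := by
  set q := p ^ m with hqdef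
  have hσσ : ∀ x : F, (x ^ q) ^ q = x := by
    intro x
    rw [← pow_mul, ← sq, ← hcard]
    exact FiniteField.pow_card x
  have hσsum : ∀ {ι : Type} (s : Finset ι) (f : ι → F),
      (∑ i ∈ s, f i) ^ q = ∑ i ∈ s, f i ^ q := by
    intro ι s f
    have := map_sum (iterateFrobenius F p m) f s
    simpa only [iterateFrobenius_def] using this
  have hσmul : ∀ x y : F, (x * y) ^ q = x ^ q * y ^ q := fun x y => mul_pow x y q
  have hσsub : ∀ x y : F, (x - y) ^ q = x ^ q - y ^ q := by
    intro x y
    have := map_sub (iterateFrobenius F p m) x y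
    simpa only [iterateFrobenius_def] using this
  have hσ0 : (0 : F) ^ q = 0 := zero_pow (by omega : q ≠ 0)
  have hσ1 : (1 : F) ^ q = 1 := one_pow q
  -- the off-diagonal part
  set u : Fin k × Fin k → Fin k → F := fun c i =>
    if c.1 < c.2 then (if i = c.1 then 1 else if i = c.2 then (N c.1 c.2) ^ q else 0)
    else 0 with hu
  set R : Fin k → F := fun a => ∑ c : Fin k × Fin k, u c a * (u c a) ^ q with hR
  set d : Fin k → F := fun a => N a a - R a with hd
  have hdfix : ∀ a, (d a) ^ q = d a := by
    intro a
    rw [hd]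
    simp only
    rw [hσsub, hN a a, hR]
    simp only
    rw [hσsum]
    congr 1
    refine Finset.sum_congr rfl fun c _ => ?_
    rw [hσmul, hσσ]
    ring
  choose α hα using fun a => norm_surj q hq hcard (d a) (hdfix a)
  set D : Matrix (Fin k) (Fin k ⊕ Fin k × Fin k) F := Matrix.of fun a c =>
    Sum.elim (fun x => if a = x then α x else 0) (fun c' => u c' a) c with hD
  refine ⟨D, fun a b => ?_⟩
  rw [Fintype.sum_sum_type]
  have h1 : ∑ x : Fin k, D a (Sum.inl x) * D b (Sum.inl x) ^ q
      = if a = b then d a else 0 := by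
    rcases eq_or_ne a b with rfl | hab
    · rw [if_pos rfl]
      rw [Finset.sum_eq_single a]
      · simp [hD, hα]
      · intro x _ hx
        simp [hD, Ne.symm hx, hx.symm]  -- a = x false
      · intro h; exact absurd (Finset.mem_univ a) h
    · rw [if_neg hab]
      refine Finset.sum_eq_zero fun x _ => ?_
      rcases eq_or_ne a x with rfl | hax
      · simp [hD, Ne.symm, hab, hσ0]
      · simp [hD, hax]
  have h2 : ∑ c' : Fin k × Fin k, D a (Sum.inr c') * D b (Sum.inr c') ^ q
      = if a = b then R a else N a b := by
    have hDu : ∀ (c' : Fin k × Fin k) (i : Fin k), D i (Sum.inr c') = u c' i := fun _ _ => rfl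
    simp only [hDu]
    rcases eq_or_ne a b with rfl | hab
    · rw [if_pos rfl, hR]
    · rw [if_neg hab]
      rcases lt_or_gt_of_ne hab with hlt | hgt
      · rw [Finset.sum_eq_single (a, b)]
        · have hba : ¬ (b = a) := fun h => ne_of_gt hlt h
          simp only [hu]
          simp [hlt, hba, hσσ]
        · intro c _ hc
          simp only [hu]
          by_cases h1 : c.1 < c.2
          · rw [if_pos h1, if_pos h1]
            rcases eq_or_ne a c.1 with ha1 | ha1
            · rw [if_pos ha1, one_mul]
              rcases eq_or_ne b c.1 with hb1 | hb1
              · omega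
              rw [if_neg hb1]
              rcases eq_or_ne b c.2 with hb2 | hb2
              · exfalso; apply hc; rw [Prod.ext_iff]; exact ⟨ha1.symm, hb2.symm⟩
              · rw [if_neg hb2, hσ0]
            · rw [if_neg ha1]
              rcases eq_or_ne a c.2 with ha2 | ha2
              · rcases eq_or_ne b c.1 with hb1 | hb1
                · omega
                · rw [if_neg hb1]
                  rcases eq_or_ne b c.2 with hb2 | hb2
                  · omega
                  · rw [if_pos ha2, if_neg hb2, hσ0, mul_zero]
              · rw [if_neg ha2, zero_mul]
          · rw [if_neg h1, if_neg h1, zero_mul]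
        · intro h; exact absurd (Finset.mem_univ _) h
      · rw [Finset.sum_eq_single (b, a)]
        · have hba : ¬ (a = b) := hab
          simp only [hu]
          simp [hgt, hba, hN]
        · intro c _ hc
          simp only [hu]
          by_cases h1 : c.1 < c.2
          · rw [if_pos h1, if_pos h1]
            rcases eq_or_ne a c.1 with ha1 | ha1
            · rw [if_pos ha1, one_mul]
              rcases eq_or_ne b c.1 with hb1 | hb1
              · omega
              rw [if_neg hb1]
              rcases eq_or_ne b c.2 with hb2 | hb2
              · omega
              · rw [if_neg hb2, hσ0]
            · rw [if_neg ha1]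
              rcases eq_or_ne a c.2 with ha2 | ha2
              · rcases eq_or_ne b c.1 with hb1 | hb1
                · rcases eq_or_ne a c.2 with _ | _
                  · exfalso; apply hc; rw [Prod.ext_iff]; exact ⟨hb1.symm, ha2.symm⟩
                  · omega
                · rw [if_neg hb1]
                  rcases eq_or_ne b c.2 with hb2 | hb2
                  · omega
                  · rw [if_pos ha2, if_neg hb2, hσ0, mul_zero]
              · rw [if_neg ha2, zero_mul]
          · rw [if_neg h1, if_neg h1, zero_mul]
        · intro h; exact absurd (Finset.mem_univ _) h
  rw [h1, h2]
  rcases eq_or_ne a b with rfl | hab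
  · simp [hd]
  · simp [hab]

lemma mem_dualH {F : Type*} [Field F] (p m : ℕ) [Fact p.Prime] [CharP F p]
    {ι : Type*} [Fintype ι] (C : Submodule F (ι → F)) (v : ι → F) :
    v ∈ dualH p m C ↔ ∀ u ∈ C, ∑ i, u i * v i ^ p ^ m = 0 := Iff.rfl

/-- Let `q = p ^ m` be a prime power.  For every `[n,k]` linear code `C`
over `F_{q^2}` and every `0 ≤ t ≤ k` there exists a `t`-dimensional Hermitian hull
embedding of `C`. -/
theorem exists_hullH_embedding {F : Type*} [Field F] [Fintype F]
    (p m : ℕ) [Fact p.Prime] [CharP F p] (hm : 1 ≤ m)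
    (hcard : Fintype.card F = (p ^ m) ^ 2)
    {n k t : ℕ} (C : Submodule F (Fin n → F)) (hk : Module.finrank F C = k) (ht : t ≤ k) :
    ∃ (s : ℕ) (Ct : Submodule F ((Fin n ⊕ Fin s) → F)), IsHullEmbH p m k C Ct t := by
  classical
  have hq2 : 2 ≤ p ^ m := by
    have hp : 2 ≤ p := (Fact.out : p.Prime).two_le
    calc 2 = 2 ^ 1 := rfl
    _ ≤ 2 ^ m := Nat.pow_le_pow_right (by omega) hm
    _ ≤ p ^ m := Nat.pow_le_pow_left hp m
  -- Frobenius-power facts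
  have hσσ : ∀ x : F, (x ^ p ^ m) ^ p ^ m = x := by
    intro x
    rw [← pow_mul, ← sq, ← hcard]
    exact FiniteField.pow_card x
  have hσsum : ∀ {ι : Type} (s : Finset ι) (f : ι → F),
      (∑ i ∈ s, f i) ^ p ^ m = ∑ i ∈ s, f i ^ p ^ m := by
    intro ι s f
    have := map_sum (iterateFrobenius F p m) f s
    simpa only [iterateFrobenius_def] using this
  have hσsub : ∀ x y : F, (x - y) ^ p ^ m = x ^ p ^ m - y ^ p ^ m := by
    intro x y
    have := map_sub (iterateFrobenius F p m) x y
    simpa only [iterateFrobenius_def] using this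
  have hσ0 : (0 : F) ^ p ^ m = 0 := zero_pow (by omega : p ^ m ≠ 0)
  have hσinj : ∀ x : F, x ^ p ^ m = 0 → x = 0 := by
    intro x hx
    have := hσσ x
    rw [hx, hσ0] at this
    exact this.symm
  -- a basis of C as rows of G
  let b : Module.Basis (Fin k) F C := Module.finBasisOfFinrankEq F C hk
  set G : Matrix (Fin k) (Fin n) F := Matrix.of fun i => (b i : Fin n → F) with hGdef
  have hGindep : LinearIndependent F (fun i => G i) :=
    b.linearIndependent.map' C.subtype (Submodule.ker_subtype C)
  have hGspan : Submodule.span F (Set.range fun i => G i) = C := by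
    have h1 : (Set.range fun i => G i) = C.subtype '' Set.range b := by
      rw [← Set.range_comp]; rfl
    rw [h1, Submodule.span_image, Module.Basis.span_eq, Submodule.map_top,
      Submodule.range_subtype]
  -- Gram matrix of G and the target Hermitian matrix
  set A : Matrix (Fin k) (Fin k) F := Matrix.of fun a c => ∑ i, G a i * G c i ^ p ^ m with hAdef
  set H : Matrix (Fin k) (Fin k) F :=
    Matrix.of fun a c => if a = c ∧ t ≤ (a : ℕ) then 1 else 0 with hHdef
  have hAherm : ∀ a c, A a c ^ p ^ m = A c a := by
    intro a c
    show (∑ i, G a i * G c i ^ p ^ m) ^ p ^ m = ∑ i, G c i * G a i ^ p ^ m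
    rw [hσsum]
    refine Finset.sum_congr rfl fun i _ => ?_
    rw [mul_pow, hσσ]
    ring
  have hHherm : ∀ a c, H a c ^ p ^ m = H c a := by
    intro a c
    show (if a = c ∧ t ≤ (a : ℕ) then (1:F) else 0) ^ p ^ m
      = (if c = a ∧ t ≤ (c : ℕ) then (1:F) else 0)
    have hiff : (a = c ∧ t ≤ (a : ℕ)) ↔ (c = a ∧ t ≤ (c : ℕ)) := by
      constructor <;> rintro ⟨rfl, h⟩ <;> exact ⟨rfl, h⟩
    split_ifs with h1 h2 h3
    · exact one_pow _
    · exact absurd (hiff.1 h1) h2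
    · exact absurd (hiff.2 h3) h1
    · exact hσ0
  have hNherm : ∀ a c, (H - A) a c ^ p ^ m = (H - A) c a := by
    intro a c
    simp only [Matrix.sub_apply]
    rw [hσsub, hAherm, hHherm]
  obtain ⟨D₀, hD₀⟩ := exists_gram p m hq2 hcard (H - A) hNherm
  set s : ℕ := k + k * k with hsdef
  set e : (Fin k ⊕ Fin k × Fin k) ≃ Fin s :=
    (Equiv.sumCongr (Equiv.refl (Fin k)) finProdFinEquiv).trans finSumFinEquiv with hedef
  set D : Matrix (Fin k) (Fin s) F := Matrix.of fun a c => D₀ a (e.symm c) with hDdef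
  have hDsum : ∀ a c : Fin k, ∑ j, D a j * D c j ^ p ^ m = (H - A) a c := by
    intro a c
    rw [← Equiv.sum_comp e (fun j => D a j * D c j ^ p ^ m)]
    rw [← hD₀ a c]
    refine Finset.sum_congr rfl fun i _ => ?_
    show D₀ a (e.symm (e i)) * D₀ c (e.symm (e i)) ^ p ^ m = _
    rw [Equiv.symm_apply_apply]
  -- the extended code
  set r : Fin k → (Fin n ⊕ Fin s) → F := fun a => Sum.elim (G a) (D a) with hrdef
  set Ct : Submodule F ((Fin n ⊕ Fin s) → F) := Submodule.span F (Set.range r) with hCt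
  have hGram : ∀ a c, ∑ i, r a i * r c i ^ p ^ m = H a c := by
    intro a c
    rw [Fintype.sum_sum_type]
    have h1 : ∑ i : Fin n, r a (Sum.inl i) * r c (Sum.inl i) ^ p ^ m = A a c := rfl
    have h2 : ∑ j : Fin s, r a (Sum.inr j) * r c (Sum.inr j) ^ p ^ m = (H - A) a c :=
      hDsum a c
    rw [h1, h2, Matrix.sub_apply]
    ring
  have hrindep : LinearIndependent F r := by
    apply LinearIndependent.of_comp (LinearMap.funLeft F F Sum.inl)
    exact hGindep
  -- hull is the span of the first t rows
  have hhull : hullH p m Ct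
      = Submodule.span F (Set.range fun j : Fin t => r (Fin.castLE ht j)) := by
    apply le_antisymm
    · rintro v hv
      rw [hullH, Submodule.mem_inf] at hv
      obtain ⟨hvC, hvD⟩ := hv
      rw [mem_dualH] at hvD
      obtain ⟨x, hx⟩ := (Submodule.mem_span_range_iff_exists_fun F).1 hvC
      have hxz : ∀ a : Fin k, t ≤ (a : ℕ) → x a = 0 := by
        intro a hta
        have h := hvD (r a) (Submodule.subset_span ⟨a, rfl⟩)
        rw [← hx] at h
        have hcomp : ∑ i, r a i * (∑ l, x l • r l) i ^ p ^ m
            = ∑ l, x l ^ p ^ m * H a l := by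
          have hv' : ∀ i, (∑ l, x l • r l) i ^ p ^ m = ∑ l, x l ^ p ^ m * r l i ^ p ^ m := by
            intro i
            rw [Finset.sum_apply]
            simp only [Pi.smul_apply, smul_eq_mul]
            rw [hσsum]
            exact Finset.sum_congr rfl fun l _ => mul_pow _ _ _
          calc ∑ i, r a i * (∑ l, x l • r l) i ^ p ^ m
              = ∑ i, ∑ l, x l ^ p ^ m * (r a i * r l i ^ p ^ m) := by
                refine Finset.sum_congr rfl fun i _ => ?_
                rw [hv', Finset.mul_sum]
                exact Finset.sum_congr rfl fun l _ => by ring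
            _ = ∑ l, x l ^ p ^ m * ∑ i, r a i * r l i ^ p ^ m := by
                rw [Finset.sum_comm]
                exact Finset.sum_congr rfl fun l _ => by rw [Finset.mul_sum]
            _ = ∑ l, x l ^ p ^ m * H a l := by
                exact Finset.sum_congr rfl fun l _ => by rw [hGram]
        rw [hcomp] at h
        have hsingle : ∑ l, x l ^ p ^ m * H a l = x a ^ p ^ m := by
          rw [Finset.sum_eq_single a]
          · show x a ^ p ^ m * (if a = a ∧ t ≤ (a:ℕ) then (1:F) else 0) = _
            rw [if_pos ⟨rfl, hta⟩, mul_one]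
          · intro l _ hl
            show x l ^ p ^ m * (if a = l ∧ t ≤ (a:ℕ) then (1:F) else 0) = 0
            rw [if_neg (fun hcon => hl (hcon.1.symm)), mul_zero]
          · intro hcon; exact absurd (Finset.mem_univ a) hcon
        rw [hsingle] at h
        exact hσinj _ h
      rw [← hx]
      refine Submodule.sum_mem _ fun l _ => ?_
      by_cases hl : (l : ℕ) < t
      · refine Submodule.smul_mem _ _ (Submodule.subset_span ⟨⟨(l : ℕ), hl⟩, ?_⟩)
        rfl
      · rw [hxz l (by omega), zero_smul]
        exact Submodule.zero_mem _
    · rw [Submodule.span_le]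
      rintro _ ⟨j, rfl⟩
      rw [SetLike.mem_coe, hullH, Submodule.mem_inf]
      constructor
      · exact Submodule.subset_span ⟨_, rfl⟩
      · rw [mem_dualH]
        intro w hw
        set L : ((Fin n ⊕ Fin s) → F) →ₗ[F] F :=
          { toFun := fun u => ∑ i, u i * (r (Fin.castLE ht j)) i ^ p ^ m
            map_add' := by
              intro u1 u2
              simp only [Pi.add_apply, add_mul]
              rw [Finset.sum_add_distrib]
            map_smul' := by
              intro c u
              simp only [Pi.smul_apply, smul_eq_mul, RingHom.id_apply]
              rw [Finset.mul_sum]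
              exact Finset.sum_congr rfl fun i _ => by ring } with hLdef
        have hker : Ct ≤ LinearMap.ker L := by
          rw [hCt, Submodule.span_le]
          rintro _ ⟨a, rfl⟩
          rw [SetLike.mem_coe, LinearMap.mem_ker]
          show ∑ i, r a i * (r (Fin.castLE ht j)) i ^ p ^ m = 0
          rw [hGram]
          show (if a = Fin.castLE ht j ∧ t ≤ (a : ℕ) then (1:F) else 0) = 0
          rw [if_neg]
          rintro ⟨rfl, hta⟩
          have : ((Fin.castLE ht j : Fin k) : ℕ) = (j : ℕ) := rfl
          omega
        exact hker hw
  refine ⟨s, Ct, ?_, G, D, ⟨hGindep, hGspan⟩, ?_, ?_⟩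
  · rw [hhull]
    have hli : LinearIndependent F (fun j : Fin t => r (Fin.castLE ht j)) :=
      hrindep.comp _ (Fin.castLE_injective ht)
    rw [finrank_span_eq_card hli, Fintype.card_fin]
  · show LinearIndependent F (fun a => Matrix.fromCols G D a)
    exact hrindep
  · show Submodule.span F (Set.range fun a => Matrix.fromCols G D a) = Ct
    rfl
end

section
/- Let C be an [n,k] linear code over F_q with ℓ = dim Hull_E(C), and let t be an integer with 0 ≤ t < ℓ. Then the length of the shortest t-dimensional Euclidean hull embeddings of C is n + ℓ − t; that is, ℓ − t is the minimum over all s ≥ 0 such that there exists a k×s matrix D with [G | D] generating a t-dimensional Euclidean hull embedding of C, where G is a generator matrix of C. -/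
open Matrix

set_option maxHeartbeats 1000000
set_option synthInstance.maxHeartbeats 200000
set_option linter.unusedSectionVars false

section Aux

variable {F : Type*} [Field F] {κ ι : Type*} [Fintype ι] [Fintype κ]

lemma mem_dualE_iff {C : Submodule F (ι → F)} {G : Matrix κ ι F}
    (hG : Submodule.span F (Set.range fun i => G i) = C) (v : ι → F) :
    v ∈ dualE C ↔ ∀ i, G i ⬝ᵥ v = 0 := by
  constructor
  · intro hv i
    exact hv (G i) (hG ▸ Submodule.subset_span ⟨i, rfl⟩)
  · intro h u hu
    rw [← hG] at hu
    induction hu using Submodule.span_induction with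
    | mem x hx => obtain ⟨i, rfl⟩ := hx; exact h i
    | zero => simp
    | add x y _ _ hx hy => rw [add_dotProduct, hx, hy, add_zero]
    | smul c x _ hx => rw [smul_dotProduct, hx, smul_zero]

lemma mulVec_vecMul_eq (G : Matrix κ ι F) (x : κ → F) :
    G *ᵥ (x ᵥ* G) = (G * Gᵀ) *ᵥ x := by
  ext i
  simp only [Matrix.mulVec, Matrix.vecMul, dotProduct, Matrix.mul_apply,
    Matrix.transpose_apply, Finset.sum_mul, Finset.mul_sum]
  rw [Finset.sum_comm]
  congr 1; ext j; congr 1; ext m; ring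

lemma hullE_eq_map_ker {C : Submodule F (ι → F)} {G : Matrix κ ι F}
    (hG : IsGenMat C G) :
    hullE C = Submodule.map G.vecMulLinear (LinearMap.ker (G * Gᵀ).mulVecLin) := by
  ext v
  constructor
  · rintro ⟨hvC, hvD⟩
    have : v ∈ LinearMap.range G.vecMulLinear := by
      rw [range_vecMulLinear]; change v ∈ Submodule.span F (Set.range fun i => G i)
      rw [hG.2]; exact hvC
    obtain ⟨x, rfl⟩ := this
    refine ⟨x, LinearMap.mem_ker.mpr ?_, rfl⟩
    rw [Matrix.mulVecLin_apply, ← mulVec_vecMul_eq]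
    ext i
    have := (mem_dualE_iff hG.2 _).mp hvD i
    simpa [Matrix.mulVec, Matrix.vecMulLinear_apply] using this
  · rintro ⟨x, hx, rfl⟩
    simp only [SetLike.mem_coe, LinearMap.mem_ker, Matrix.mulVecLin_apply] at hx
    constructor
    · rw [← hG.2]; change _ ∈ Submodule.span F (Set.range G.row); rw [← range_vecMulLinear]
      exact ⟨x, rfl⟩
    · rw [SetLike.mem_coe, mem_dualE_iff hG.2]
      intro i
      have : (G *ᵥ (x ᵥ* G)) i = 0 := by rw [mulVec_vecMul_eq, hx]; rfl
      simpa [Matrix.mulVec, Matrix.vecMulLinear_apply] using this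

lemma finrank_hullE_add_rank {C : Submodule F (ι → F)} {G : Matrix κ ι F}
    (hG : IsGenMat C G) :
    Module.finrank F (hullE C) + (G * Gᵀ).rank = Fintype.card κ := by
  have hinj : Function.Injective G.vecMulLinear := by
    rw [Matrix.coe_vecMulLinear]
    exact Matrix.vecMul_injective_iff.mpr hG.1
  have e := Submodule.equivMapOfInjective G.vecMulLinear hinj
    (LinearMap.ker (Matrix.mulVecLin (G * Gᵀ)))
  rw [hullE_eq_map_ker hG, ← LinearEquiv.finrank_eq e, Matrix.rank, add_comm,
    LinearMap.finrank_range_add_finrank_ker (Matrix.mulVecLin (G * Gᵀ))]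
  exact Module.finrank_pi F

lemma matrix_rank_add_le (A B : Matrix κ ι F) : (A + B).rank ≤ A.rank + B.rank := by
  have h : LinearMap.range (A + B).mulVecLin ≤
      LinearMap.range A.mulVecLin ⊔ LinearMap.range B.mulVecLin := by
    rintro v ⟨x, rfl⟩
    refine Submodule.mem_sup.mpr ⟨A *ᵥ x, ⟨x, rfl⟩, B *ᵥ x, ⟨x, rfl⟩, ?_⟩
    simp [Matrix.add_mulVec]
  exact le_trans (Submodule.finrank_mono h)
    (Submodule.finrank_add_le_finrank_add_finrank _ _)

lemma hull_lower_bound {n s k ℓ t : ℕ} (C : Submodule F (Fin n → F))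
    (hℓ : Module.finrank F (hullE C) = ℓ)
    (Ct : Submodule F ((Fin n ⊕ Fin s) → F)) (h : IsHullEmbE k C Ct t) :
    ℓ - t ≤ s := by
  obtain ⟨hdim, G, D, hG, hGt⟩ := h
  have h1 : ℓ + (G * Gᵀ).rank = k := by
    have h := finrank_hullE_add_rank hG
    rw [hℓ, Fintype.card_fin] at h
    exact h
  have h2 : t + (Matrix.fromCols G D * (Matrix.fromCols G D)ᵀ).rank = k := by
    have h := finrank_hullE_add_rank hGt
    rw [hdim, Fintype.card_fin] at h
    exact h
  have h3 : Matrix.fromCols G D * (Matrix.fromCols G D)ᵀ = G * Gᵀ + D * Dᵀ := by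
    rw [Matrix.transpose_fromCols, Matrix.fromCols_mul_fromRows]
  have h4 : (G * Gᵀ + D * Dᵀ).rank ≤ (G * Gᵀ).rank + s := by
    refine (matrix_rank_add_le _ _).trans (add_le_add_right ?_ _)
    exact (Matrix.rank_mul_le_left D Dᵀ).trans (by simpa using Matrix.rank_le_card_width D)
  rw [h3] at h2
  omega

lemma exists_adapted_genmat {k ℓ : ℕ} (C : Submodule F (ι → F))
    (hk : Module.finrank F C = k) (hℓ : Module.finrank F (hullE C) = ℓ) :
    ∃ G : Matrix (Fin ℓ ⊕ Fin (k - ℓ)) ι F,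
      IsGenMat C G ∧ ∀ i : Fin ℓ, G (Sum.inl i) ∈ hullE C := by
  have hle : hullE C ≤ C := inf_le_left
  set H' : Submodule F C := Submodule.comap C.subtype (hullE C) with hH'
  have hH'rank : Module.finrank F H' = ℓ := by
    rw [← hℓ]
    exact (Submodule.comapSubtypeEquivOfLe hle).finrank_eq
  obtain ⟨W, hW⟩ := Submodule.exists_isCompl H'
  have hWrank : Module.finrank F W = k - ℓ := by
    have := Submodule.finrank_add_eq_of_isCompl hW
    rw [hH'rank, hk] at this
    omega
  haveI : Module.Free F H' := Module.Free.of_divisionRing F ↥H'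
  haveI : Module.Free F W := Module.Free.of_divisionRing F ↥W
  let bH : Module.Basis (Fin ℓ) F H' := Module.finBasisOfFinrankEq F H' hH'rank
  let bW : Module.Basis (Fin (k - ℓ)) F W := Module.finBasisOfFinrankEq F W hWrank
  let b : Module.Basis (Fin ℓ ⊕ Fin (k - ℓ)) F C :=
    (bH.prod bW).map (Submodule.prodEquivOfIsCompl H' W hW)
  refine ⟨fun i => ((b i : C) : ι → F), ⟨?_, ?_⟩, ?_⟩
  · exact b.linearIndependent.map' C.subtype (Submodule.ker_subtype C)
  · have h1 : (Set.range fun i => ((b i : C) : ι → F)) = C.subtype '' Set.range b := by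
      rw [← Set.range_comp]; rfl
    rw [h1, ← Submodule.map_span, b.span_eq, Submodule.map_subtype_top]
  · intro i
    have hb : (b (Sum.inl i) : C) = ((bH i : C) : C) := by
      simp only [b, Module.Basis.map_apply, Module.Basis.prod_apply]
      simp [Submodule.coe_prodEquivOfIsCompl']
    have h2 : C.subtype ((bH i : C)) ∈ hullE C := (bH i).2
    show ((b (Sum.inl i) : C) : ι → F) ∈ hullE C
    exact hb ▸ h2

lemma finrank_hullE_eq_finrank_ker {C : Submodule F (ι → F)} {G : Matrix κ ι F}
    (hG : IsGenMat C G) :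
    Module.finrank F (hullE C) =
      Module.finrank F (LinearMap.ker (Matrix.mulVecLin (G * Gᵀ))) := by
  have h1 := finrank_hullE_add_rank hG
  have h2 : (G * Gᵀ).rank +
      Module.finrank F (LinearMap.ker (Matrix.mulVecLin (G * Gᵀ))) = Fintype.card κ := by
    rw [Matrix.rank, LinearMap.finrank_range_add_finrank_ker (Matrix.mulVecLin (G * Gᵀ))]
    exact Module.finrank_pi F
  omega

lemma finrank_ker_funLeft {α β : Type*} [Fintype α] [Fintype β] (f : β → α)
    (hf : Function.Injective f) :
    Module.finrank F (LinearMap.ker (LinearMap.funLeft F F f)) + Fintype.card β =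
      Fintype.card α := by
  have hsurj := LinearMap.funLeft_surjective_of_injective F F f hf
  have h := LinearMap.finrank_range_add_finrank_ker (LinearMap.funLeft F F f)
  rw [LinearMap.range_eq_top.mpr hsurj, finrank_top, Module.finrank_pi, Module.finrank_pi] at h
  omega

lemma exists_embedding {n k ℓ t : ℕ} (C : Submodule F (Fin n → F))
    (hk : Module.finrank F C = k) (hℓ : Module.finrank F (hullE C) = ℓ) (htl : t ≤ ℓ) :
    ∃ Ct : Submodule F ((Fin n ⊕ Fin (ℓ - t)) → F), IsHullEmbE k C Ct t := by
  classical
  have hlk : ℓ ≤ k := by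
    rw [← hk, ← hℓ]
    exact Submodule.finrank_mono inf_le_left
  obtain ⟨G, hG, hGhull⟩ := exists_adapted_genmat C hk hℓ
  let c : Fin (ℓ - t) → (Fin ℓ ⊕ Fin (k - ℓ)) :=
    fun j => Sum.inl ⟨t + j.1, by have := j.2; omega⟩
  have hcinj : Function.Injective c := by
    intro a b hab
    simp only [c, Sum.inl.injEq, Fin.mk.injEq] at hab
    exact Fin.ext (by omega)
  let D : Matrix (Fin ℓ ⊕ Fin (k - ℓ)) (Fin (ℓ - t)) F := fun i j => if i = c j then 1 else 0
  let Gt := Matrix.fromCols G D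
  have hGtrows : LinearIndependent F (fun i => Gt i) := by
    apply LinearIndependent.of_comp (LinearMap.funLeft F F (Sum.inl : Fin n → Fin n ⊕ Fin (ℓ - t)))
    have he : (⇑(LinearMap.funLeft F F (Sum.inl : Fin n → Fin n ⊕ Fin (ℓ - t)))) ∘
        (fun i => Gt i) = fun i => G i := by
      funext i
      ext x
      simp [Gt, LinearMap.funLeft_apply, Matrix.fromCols_apply_inl]
    rw [he]
    exact hG.1
  set Ct := Submodule.span F (Set.range fun i => Gt i) with hCt
  have hGt : IsGenMat Ct Gt := ⟨hGtrows, rfl⟩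
  set M := G * Gᵀ with hM
  have hGrow : ∀ j, G j ∈ C := fun j => hG.2 ▸ Submodule.subset_span ⟨j, rfl⟩
  have hMcol : ∀ j i, M j (Sum.inl i) = 0 := by
    intro j i
    have h0 : G j ⬝ᵥ G (Sum.inl i) = 0 := (hGhull i).2 (G j) (hGrow j)
    simpa [hM, Matrix.mul_apply, dotProduct, Matrix.transpose_apply] using h0
  have hMrow : ∀ i j, M (Sum.inl i) j = 0 := by
    intro i j
    have h0 : G j ⬝ᵥ G (Sum.inl i) = 0 := (hGhull i).2 (G j) (hGrow j)
    rw [dotProduct_comm] at h0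
    simpa [hM, Matrix.mul_apply, dotProduct, Matrix.transpose_apply] using h0
  -- kernel of M
  have hMker : LinearMap.ker (Matrix.mulVecLin M) =
      LinearMap.ker (LinearMap.funLeft F F (Sum.inr : Fin (k - ℓ) → Fin ℓ ⊕ Fin (k - ℓ))) := by
    symm
    apply Submodule.eq_of_le_of_finrank_le
    · intro x hx
      have hx' : ∀ j, x (Sum.inr j) = 0 := fun j => congr_fun (LinearMap.mem_ker.mp hx) j
      rw [LinearMap.mem_ker]
      ext j
      rw [Matrix.mulVecLin_apply]
      show (M *ᵥ x) j = 0
      rw [Matrix.mulVec, dotProduct]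
      rw [Fintype.sum_sum_type]
      simp [hMcol, hx']
    · have e1 : Module.finrank F (LinearMap.ker (Matrix.mulVecLin M)) = ℓ := by
        rw [← finrank_hullE_eq_finrank_ker hG, hℓ]
      have e2 := finrank_ker_funLeft (F := F)
        (Sum.inr : Fin (k - ℓ) → Fin ℓ ⊕ Fin (k - ℓ)) Sum.inr_injective
      simp only [Fintype.card_sum, Fintype.card_fin] at e2
      omega
  have hMx : ∀ x, (∀ j, x (Sum.inr j) = 0) → M *ᵥ x = 0 := by
    intro x hx
    have : x ∈ LinearMap.ker (LinearMap.funLeft F F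
        (Sum.inr : Fin (k - ℓ) → Fin ℓ ⊕ Fin (k - ℓ))) := by
      rw [LinearMap.mem_ker]; ext j; exact hx j
    rw [← hMker, LinearMap.mem_ker] at this
    exact this
  have hMx' : ∀ x, M *ᵥ x = 0 → ∀ j, x (Sum.inr j) = 0 := by
    intro x hx j
    have : x ∈ LinearMap.ker (Matrix.mulVecLin M) := by
      rw [LinearMap.mem_ker]; exact hx
    rw [hMker, LinearMap.mem_ker] at this
    exact congr_fun this j
  -- the D-related computations
  have hDt : ∀ (x : (Fin ℓ ⊕ Fin (k - ℓ)) → F) (j : Fin (ℓ - t)), (Dᵀ *ᵥ x) j = x (c j) := by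
    intro x j
    rw [Matrix.mulVec, dotProduct]
    simp only [Matrix.transpose_apply]
    simp [D, Matrix.transpose_apply, ite_mul, one_mul, zero_mul]
  have hDc : ∀ j j' : Fin (ℓ - t), D (c j) j' = if j = j' then 1 else 0 := by
    intro j j'
    by_cases h : j = j'
    · subst h; simp [D]
    · have : c j ≠ c j' := fun hh => h (hcinj hh)
      simp [D, this, h]
  have hDDc : ∀ (x : (Fin ℓ ⊕ Fin (k - ℓ)) → F) (j : Fin (ℓ - t)),
      (D *ᵥ (Dᵀ *ᵥ x)) (c j) = x (c j) := by
    intro x j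
    rw [Matrix.mulVec, dotProduct]
    simp only [hDc, ite_mul, one_mul, zero_mul]
    rw [Finset.sum_ite_eq (Finset.univ) j (fun j' => (Dᵀ *ᵥ x) j')]
    simp [hDt]
  have hkerEq : LinearMap.ker (Matrix.mulVecLin (M + D * Dᵀ)) =
      LinearMap.ker (LinearMap.funLeft F F
        (Sum.elim (Sum.inr : Fin (k - ℓ) → Fin ℓ ⊕ Fin (k - ℓ)) c)) := by
    ext x
    simp only [LinearMap.mem_ker, Matrix.mulVecLin_apply]
    constructor
    · intro hx
      have hinl : ∀ i : Fin ℓ, ((D * Dᵀ) *ᵥ x) (Sum.inl i) = 0 := by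
        intro i
        have h0 := congr_fun hx (Sum.inl i)
        rw [Matrix.add_mulVec, Pi.add_apply] at h0
        have h1 : (M *ᵥ x) (Sum.inl i) = 0 := by
          rw [Matrix.mulVec, dotProduct]
          simp [hMrow]
        rw [h1, zero_add] at h0
        exact h0
      have hxc : ∀ j, x (c j) = 0 := by
        intro j
        have h3 : x (c j) = ((D * Dᵀ) *ᵥ x) (c j) := by
          rw [← Matrix.mulVec_mulVec]
          exact (hDDc x j).symm
        rw [h3]
        exact hinl ⟨t + j.1, by have := j.2; omega⟩
      have hDTx : Dᵀ *ᵥ x = 0 := by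
        ext j
        rw [hDt]
        exact hxc j
      have hDDx : (D * Dᵀ) *ᵥ x = 0 := by
        rw [← Matrix.mulVec_mulVec, hDTx, Matrix.mulVec_zero]
      have hMx0 : M *ᵥ x = 0 := by
        have h4 := hx
        rw [Matrix.add_mulVec, hDDx, add_zero] at h4
        exact h4
      have hxr := hMx' x hMx0
      ext z
      cases z with
      | inl j => exact hxr j
      | inr j => exact hxc j
    · intro hx
      have hxr : ∀ j, x (Sum.inr j) = 0 := fun j => congr_fun hx (Sum.inl j)
      have hxc : ∀ j, x (c j) = 0 := fun j => congr_fun hx (Sum.inr j)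
      have hDTx : Dᵀ *ᵥ x = 0 := by
        ext j
        rw [hDt]
        exact hxc j
      rw [Matrix.add_mulVec, hMx x hxr, ← Matrix.mulVec_mulVec, hDTx, Matrix.mulVec_zero,
        add_zero]
  have hginj : Function.Injective
      (Sum.elim (Sum.inr : Fin (k - ℓ) → Fin ℓ ⊕ Fin (k - ℓ)) c) := by
    intro a b hab
    cases a with
    | inl a => cases b with
      | inl b => simpa using Sum.inr_injective hab
      | inr b => simp [c] at hab
    | inr a => cases b with
      | inl b => simp [c] at hab
      | inr b => simpa using hcinj hab
  have hcard : Module.finrank F (LinearMap.ker (LinearMap.funLeft F F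
      (Sum.elim (Sum.inr : Fin (k - ℓ) → Fin ℓ ⊕ Fin (k - ℓ)) c))) = t := by
    have h5 := finrank_ker_funLeft (F := F) _ hginj
    simp only [Fintype.card_sum, Fintype.card_fin] at h5
    omega
  have hGram : Gt * Gtᵀ = M + D * Dᵀ := by
    rw [hM]
    show Matrix.fromCols G D * (Matrix.fromCols G D)ᵀ = _
    rw [Matrix.transpose_fromCols, Matrix.fromCols_mul_fromRows]
  have hhullCt : Module.finrank F (hullE Ct) = t := by
    rw [finrank_hullE_eq_finrank_ker hGt, hGram, hkerEq]
    exact hcard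
  have hk' : k = ℓ + (k - ℓ) := by omega
  let e : Fin k ≃ (Fin ℓ ⊕ Fin (k - ℓ)) := (finCongr hk').trans finSumFinEquiv.symm
  let Gk : Matrix (Fin k) (Fin n) F := Matrix.of fun i j => G (e i) j
  let Dk : Matrix (Fin k) (Fin (ℓ - t)) F := Matrix.of fun i j => D (e i) j
  have hGk : IsGenMat C Gk := by
    constructor
    · exact (linearIndependent_equiv e).mpr hG.1
    · have h6 : (Set.range fun i => Gk i) = Set.range fun i => G i := by
        rw [show (fun i => Gk i) = (fun i => G i) ∘ e from rfl, Set.range_comp,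
          Equiv.range_eq_univ, Set.image_univ]
      rw [h6, hG.2]
  have hrowseq : (fun i => Matrix.fromCols Gk Dk i) = (fun i => Gt i) ∘ e := by
    funext i
    ext z
    cases z with
    | inl j => simp [Gk, Gt, Matrix.fromCols_apply_inl]
    | inr j => simp [Dk, Gt, Matrix.fromCols_apply_inr]
  have hGtk : IsGenMat Ct (Matrix.fromCols Gk Dk) := by
    constructor
    · rw [hrowseq]
      exact (linearIndependent_equiv e).mpr hGt.1
    · have h7 : (Set.range fun i => Matrix.fromCols Gk Dk i) = Set.range fun i => Gt i := by
        rw [hrowseq, Set.range_comp, Equiv.range_eq_univ, Set.image_univ]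
      exact h7 ▸ hGt.2
  exact ⟨Ct, hhullCt, Gk, Dk, hGk, hGtk⟩

end Aux

/-- Let `C` be an `[n,k]` code over `F_q` with `ℓ = dim Hull_E(C)` and
`0 ≤ t < ℓ`.  Then the length of the shortest `t`-dimensional Euclidean hull embeddings
of `C` is `n + ℓ - t`, i.e. `ℓ - t` is the least number `s` of added coordinates for
which a `t`-dimensional Euclidean hull embedding of `C` exists. -/
theorem shortest_hullE_embedding_of_lt {F : Type*} [Field F] [Fintype F] {n k ℓ t : ℕ}
    (C : Submodule F (Fin n → F)) (hk : Module.finrank F C = k)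
    (hℓ : Module.finrank F (hullE C) = ℓ) (ht : t < ℓ) :
    IsLeast {s : ℕ | ∃ Ct : Submodule F ((Fin n ⊕ Fin s) → F), IsHullEmbE k C Ct t}
      (ℓ - t) := by
  constructor
  · exact exists_embedding C hk hℓ ht.le
  · rintro s ⟨Ct, h⟩
    exact hull_lower_bound C hℓ Ct h
end

section
/- Let C be an [n,k] linear code over F_q with ℓ = dim Hull_E(C), let 0 ≤ t < ℓ, and let C̃ be a shortest t-dimensional Euclidean hull embedding of C with generator matrix of block form [[G(Hull_E(C)), D₁], [A, D₂]], where G(Hull_E(C)) is a generator matrix of Hull_E(C) and [G(Hull_E(C)); A] is a generator matrix of C. Then rank(D₁) = ℓ − t. -/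
open Matrix

section Helpers

variable {F : Type*} [Field F]

lemma mem_span_rows_iff {m n : Type*} [Fintype m] (M : Matrix m n F) (x : n → F) :
    x ∈ Submodule.span F (Set.range fun i => M i) ↔ ∃ u, u ᵥ* M = x := by
  rw [show (Set.range fun i => M i) = Set.range M.row from rfl, ← range_vecMulLinear]
  exact LinearMap.mem_range

lemma mem_dualE_iff_s6 {ι : Type*} [Fintype ι] (C : Submodule F (ι → F)) (x : ι → F) :
    x ∈ dualE C ↔ ∀ u ∈ C, u ⬝ᵥ x = 0 := Iff.rfl

lemma mem_dualE_span {ι : Type*} [Fintype ι] (S : Set (ι → F)) (x : ι → F)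
    (h : ∀ g ∈ S, g ⬝ᵥ x = 0) : x ∈ dualE (Submodule.span F S) := by
  rw [mem_dualE_iff_s6]
  intro u hu
  induction hu using Submodule.span_induction with
  | mem g hg => exact h g hg
  | zero => simp
  | add a b _ _ ha hb => rw [add_dotProduct, ha, hb, add_zero]
  | smul c a _ ha => rw [smul_dotProduct, ha, smul_zero]

/-- Lower bound: `ℓ ≤ dim Hull(Ct) + rank D₁` for any embedding with block structure. -/
lemma hull_dim_lb {n s ℓ kl : ℕ}
    (C : Submodule F (Fin n → F))
    (Gh : Matrix (Fin ℓ) (Fin n) F) (A : Matrix (Fin kl) (Fin n) F)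
    (D₁ : Matrix (Fin ℓ) (Fin s) F) (D₂ : Matrix (Fin kl) (Fin s) F)
    (hGh : IsGenMat (hullE C) Gh)
    (hGC : IsGenMat C (Matrix.fromRows Gh A))
    (Ct : Submodule F ((Fin n ⊕ Fin s) → F))
    (hgen : IsGenMat Ct (Matrix.fromCols (Matrix.fromRows Gh A) (Matrix.fromRows D₁ D₂))) :
    ℓ ≤ Module.finrank F (hullE Ct) + D₁.rank := by
  classical
  set L : (Fin ℓ → F) →ₗ[F] ((Fin n ⊕ Fin s) → F) :=
    (Matrix.fromCols Gh (0 : Matrix (Fin ℓ) (Fin s) F)).vecMulLinear with hL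
  have hLapp : ∀ u : Fin ℓ → F, L u = Sum.elim (u ᵥ* Gh) 0 := by
    intro u; simp [hL]
  have hGhinj : Function.Injective Gh.vecMul := Matrix.vecMul_injective_iff.mpr hGh.1
  have hLinj : Function.Injective L := by
    intro u v huv
    rw [hLapp, hLapp] at huv
    apply hGhinj
    funext i
    exact congrFun huv (Sum.inl i)
  have hGhmem : ∀ u : Fin ℓ → F, u ᵥ* Gh ∈ hullE C := fun u =>
    hGh.2 ▸ (mem_span_rows_iff Gh _).2 ⟨u, rfl⟩
  set K := LinearMap.ker D₁.vecMulLinear with hK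
  have hmap : Submodule.map L K ≤ hullE Ct := by
    rintro x ⟨u, hu, rfl⟩
    have hu' : u ᵥ* D₁ = 0 := hu
    rw [hLapp]
    rw [hullE, Submodule.mem_inf]
    constructor
    · rw [← hgen.2, mem_span_rows_iff]
      refine ⟨Sum.elim u 0, ?_⟩
      rw [Matrix.vecMul_fromCols, Matrix.sumElim_vecMul_fromRows,
        Matrix.sumElim_vecMul_fromRows, Matrix.zero_vecMul, Matrix.zero_vecMul,
        add_zero, add_zero, hu']
    · rw [← hgen.2]
      apply mem_dualE_span
      rintro g ⟨i, rfl⟩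
      have hrow : Matrix.fromRows Gh A i ∈ C := hGC.2 ▸ Submodule.subset_span ⟨i, rfl⟩
      show Sum.elim (Matrix.fromRows Gh A i) (Matrix.fromRows D₁ D₂ i) ⬝ᵥ
          Sum.elim (u ᵥ* Gh) 0 = 0
      rw [sumElim_dotProduct_sumElim, dotProduct_zero, add_zero]
      exact (hGhmem u).2 _ hrow
  have h1 : Module.finrank F K ≤ Module.finrank F (hullE Ct) :=
    le_trans (le_of_eq (Submodule.equivMapOfInjective L hLinj K).finrank_eq)
      (Submodule.finrank_mono hmap)
  have h2 : Module.finrank F (LinearMap.range D₁.vecMulLinear) + Module.finrank F K = ℓ := by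
    rw [hK]
    have h := LinearMap.finrank_range_add_finrank_ker D₁.vecMulLinear
    simpa using h
  have h3 : Module.finrank F (LinearMap.range D₁.vecMulLinear) = D₁.rank := by
    rw [← Matrix.mulVecLin_transpose]
    exact Matrix.rank_transpose D₁
  omega

/-- Construction: there is a `t`-dimensional hull embedding with `ℓ - t` extra columns. -/
lemma exists_short_emb {n k ℓ t : ℕ}
    (C : Submodule F (Fin n → F)) (hk : Module.finrank F C = k)
    (hℓ : Module.finrank F (hullE C) = ℓ) (htℓ : t ≤ ℓ)
    (Gh : Matrix (Fin ℓ) (Fin n) F) (A : Matrix (Fin (k - ℓ)) (Fin n) F)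
    (hGh : IsGenMat (hullE C) Gh)
    (hGC : IsGenMat C (Matrix.fromRows Gh A)) :
    ∃ Ct' : Submodule F ((Fin n ⊕ Fin (ℓ - t)) → F), IsHullEmbE k C Ct' t := by
  classical
  set m := ℓ - t with hmdef
  have hm : m ≤ ℓ := Nat.sub_le _ _
  have hℓk : ℓ ≤ k := by
    rw [← hk, ← hℓ]
    exact Submodule.finrank_mono inf_le_left
  set D : Matrix (Fin ℓ) (Fin m) F :=
    Matrix.of (fun i j => if i = Fin.castLE hm j then (1 : F) else 0) with hD
  set B : Matrix (Fin ℓ ⊕ Fin (k - ℓ)) (Fin n) F := Matrix.fromRows Gh A with hB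
  set M : Matrix (Fin ℓ ⊕ Fin (k - ℓ)) (Fin n ⊕ Fin m) F :=
    Matrix.fromCols B (Matrix.fromRows D 0) with hM
  set Ct' : Submodule F ((Fin n ⊕ Fin m) → F) :=
    Submodule.span F (Set.range fun i => M i) with hCt'
  have hDapp : ∀ (u : Fin ℓ → F) j, (u ᵥ* D) j = u (Fin.castLE hm j) := by
    intro u j
    simp [Matrix.vecMul, dotProduct, hD, mul_ite, mul_one, mul_zero,
      Finset.sum_ite_eq']
  have hBinj : Function.Injective B.vecMul := Matrix.vecMul_injective_iff.mpr hGC.1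
  have hGhinj : Function.Injective Gh.vecMul := Matrix.vecMul_injective_iff.mpr hGh.1
  have hGhmem : ∀ u : Fin ℓ → F, u ᵥ* Gh ∈ hullE C := fun u =>
    hGh.2 ▸ (mem_span_rows_iff Gh _).2 ⟨u, rfl⟩
  have hBrow : ∀ i, B i ∈ C := fun i => hGC.2 ▸ Submodule.subset_span ⟨i, rfl⟩
  have hGhrow : ∀ i, Gh i ∈ hullE C := fun i => hGh.2 ▸ Submodule.subset_span ⟨i, rfl⟩
  -- the key linear map and kernel
  set L : (Fin ℓ → F) →ₗ[F] ((Fin n ⊕ Fin m) → F) :=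
    (Matrix.fromCols Gh (0 : Matrix (Fin ℓ) (Fin m) F)).vecMulLinear with hL
  have hLapp : ∀ u : Fin ℓ → F, L u = Sum.elim (u ᵥ* Gh) 0 := by
    intro u; simp [hL]
  have hLinj : Function.Injective L := by
    intro u v huv
    rw [hLapp, hLapp] at huv
    apply hGhinj
    funext i
    exact congrFun huv (Sum.inl i)
  set K := LinearMap.ker D.vecMulLinear with hK
  have hhull : hullE Ct' = Submodule.map L K := by
    apply le_antisymm
    · rintro x ⟨hx1, hx2⟩
      obtain ⟨v, rfl⟩ := (mem_span_rows_iff M x).1 hx1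
      set u : Fin ℓ → F := v ∘ Sum.inl with hu
      set w : Fin (k - ℓ) → F := v ∘ Sum.inr with hw
      have hv : v = Sum.elim u w := by funext i; cases i <;> rfl
      have hx : v ᵥ* M = Sum.elim (v ᵥ* B) (u ᵥ* D) := by
        rw [hM, hv, hB, Matrix.vecMul_fromCols, Matrix.sumElim_vecMul_fromRows,
          Matrix.sumElim_vecMul_fromRows, Matrix.vecMul_zero, add_zero]
      have hc : v ᵥ* B ∈ C := hGC.2 ▸ (mem_span_rows_iff B _).2 ⟨v, rfl⟩
      have hrow : ∀ i, M i ⬝ᵥ (v ᵥ* M) = 0 := fun i =>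
        hx2 (M i) (Submodule.subset_span ⟨i, rfl⟩)
      have hGhc : ∀ i, Gh i ⬝ᵥ (v ᵥ* B) = 0 := by
        intro i
        rw [dotProduct_comm]
        exact (hGhrow i).2 _ hc
      have hd0 : u ᵥ* D = 0 := by
        funext j
        have h := hrow (Sum.inl (Fin.castLE hm j))
        rw [hx] at h
        have h2 : M (Sum.inl (Fin.castLE hm j)) ⬝ᵥ Sum.elim (v ᵥ* B) (u ᵥ* D) =
            Gh (Fin.castLE hm j) ⬝ᵥ (v ᵥ* B) + D (Fin.castLE hm j) ⬝ᵥ (u ᵥ* D) := by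
          show Sum.elim (B (Sum.inl (Fin.castLE hm j))) ((Matrix.fromRows D 0) (Sum.inl (Fin.castLE hm j))) ⬝ᵥ _ = _
          rw [sumElim_dotProduct_sumElim]
          rfl
        rw [h2, hGhc, zero_add] at h
        have h3 : D (Fin.castLE hm j) ⬝ᵥ (u ᵥ* D) = (u ᵥ* D) j := by
          simp [hD, dotProduct, ite_mul, one_mul, zero_mul,
            Fin.castLE_inj, Finset.sum_ite_eq]
        rw [h3] at h
        exact h
      have hAc : ∀ i, A i ⬝ᵥ (v ᵥ* B) = 0 := by
        intro i
        have h := hrow (Sum.inr i)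
        rw [hx] at h
        have h2 : M (Sum.inr i) ⬝ᵥ Sum.elim (v ᵥ* B) (u ᵥ* D) =
            A i ⬝ᵥ (v ᵥ* B) + (0 : Fin m → F) ⬝ᵥ (u ᵥ* D) := by
          show Sum.elim (B (Sum.inr i)) ((Matrix.fromRows D 0) (Sum.inr i)) ⬝ᵥ _ = _
          rw [sumElim_dotProduct_sumElim]
          rfl
        rw [h2, zero_dotProduct, add_zero] at h
        exact h
      have hcdual : v ᵥ* B ∈ dualE C := by
        rw [← hGC.2]
        apply mem_dualE_span
        rintro g ⟨i, rfl⟩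
        cases i with
        | inl i => exact hGhc i
        | inr i => exact hAc i
      have hchull : v ᵥ* B ∈ hullE C := ⟨hc, hcdual⟩
      obtain ⟨u', hu'⟩ := (mem_span_rows_iff Gh _).1 (hGh.2 ▸ hchull)
      have hvu' : v = Sum.elim u' 0 := by
        apply hBinj
        show v ᵥ* B = Sum.elim u' 0 ᵥ* B
        rw [hB, Matrix.sumElim_vecMul_fromRows, Matrix.zero_vecMul, add_zero, hu']
      have huu' : u = u' := by
        funext i
        exact congrFun hvu' (Sum.inl i)
      refine ⟨u', ?_, ?_⟩
      · show u' ᵥ* D = 0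
        rw [← huu']
        exact hd0
      · rw [hLapp, hu', hx, hd0, ← hu']
    · rintro x ⟨u, hu, rfl⟩
      have hu' : u ᵥ* D = 0 := hu
      rw [hLapp, hullE, Submodule.mem_inf]
      constructor
      · rw [hCt', mem_span_rows_iff]
        refine ⟨Sum.elim u 0, ?_⟩
        rw [hM, Matrix.vecMul_fromCols, hB, Matrix.sumElim_vecMul_fromRows,
          Matrix.sumElim_vecMul_fromRows, Matrix.zero_vecMul, Matrix.vecMul_zero,
          add_zero, add_zero, hu']
      · rw [hCt']
        apply mem_dualE_span
        rintro g ⟨i, rfl⟩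
        show Sum.elim (B i) ((Matrix.fromRows D 0) i) ⬝ᵥ Sum.elim (u ᵥ* Gh) 0 = 0
        rw [sumElim_dotProduct_sumElim, dotProduct_zero, add_zero]
        exact (hGhmem u).2 _ (hBrow i)
  have hKrank : Module.finrank F K + m = ℓ := by
    have hsurj : Function.Surjective D.vecMulLinear := by
      intro vv
      refine ⟨fun i => if h : (i : ℕ) < m then vv ⟨i, h⟩ else 0, ?_⟩
      funext j
      rw [Matrix.vecMulLinear_apply, hDapp]
      simp
    have h2 := LinearMap.finrank_range_add_finrank_ker D.vecMulLinear
    rw [LinearMap.range_eq_top.2 hsurj, ← hK] at h2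
    have h3 : Module.finrank F (⊤ : Submodule F (Fin m → F)) = m := by simp
    have h4 : Module.finrank F (Fin ℓ → F) = ℓ := by simp
    omega
  have hdim : Module.finrank F (hullE Ct') = t := by
    rw [hhull, ← LinearEquiv.finrank_eq (Submodule.equivMapOfInjective L hLinj K)]
    omega
  -- generator matrices, reindexed to `Fin k`
  have e : Fin k ≃ Fin ℓ ⊕ Fin (k - ℓ) :=
    (finSumFinEquiv.trans (finCongr (by omega))).symm
  refine ⟨Ct', hdim, B.submatrix e id, (Matrix.fromRows D 0).submatrix e id, ?_, ?_⟩
  · constructor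
    · exact hGC.1.comp e e.injective
    · have hr : Set.range ((fun i => B i) ∘ ⇑e) = Set.range fun i => B i :=
        e.surjective.range_comp _
      rw [show (Set.range fun i => B.submatrix (⇑e) id i)
          = Set.range ((fun i => B i) ∘ ⇑e) from rfl, hr]
      exact hGC.2
  · have hsub : Matrix.fromCols (B.submatrix e id) ((Matrix.fromRows D 0).submatrix e id)
        = M.submatrix e id := by
      ext i j
      cases j <;> rfl
    rw [hsub]
    have hMindep : LinearIndependent F (fun i => M i) := by
      rw [show (fun i => M i) = M.row from rfl, ← Matrix.vecMul_injective_iff]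
      intro u v huv
      apply hBinj
      funext j
      exact congrFun huv (Sum.inl j)
    constructor
    · exact hMindep.comp e e.injective
    · have hr : Set.range ((fun i => M i) ∘ ⇑e) = Set.range fun i => M i :=
        e.surjective.range_comp _
      rw [show (Set.range fun i => M.submatrix (⇑e) id i)
          = Set.range ((fun i => M i) ∘ ⇑e) from rfl, hr]

end Helpers

/-- Let `C` be an `[n,k]` code over `F_q` with `ℓ = dim Hull_E(C)`,
`0 ≤ t < ℓ`, and let `Ct` be a shortest `t`-dimensional Euclidean hull embedding of `C`
with generator matrix in block form `[[G(Hull_E(C)), D₁], [A, D₂]]`, where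
`G(Hull_E(C))` is a generator matrix of `Hull_E(C)` and `[G(Hull_E(C)); A]` is a
generator matrix of `C`.  Then `rank D₁ = ℓ - t`. -/
theorem rank_D1_of_shortest {F : Type*} [Field F] [Fintype F] {n k ℓ t s : ℕ}
    (C : Submodule F (Fin n → F)) (hk : Module.finrank F C = k)
    (hℓ : Module.finrank F (hullE C) = ℓ) (ht : t < ℓ)
    (Gh : Matrix (Fin ℓ) (Fin n) F) (A : Matrix (Fin (k - ℓ)) (Fin n) F)
    (D₁ : Matrix (Fin ℓ) (Fin s) F) (D₂ : Matrix (Fin (k - ℓ)) (Fin s) F)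
    (hGh : IsGenMat (hullE C) Gh)
    (hGC : IsGenMat C (Matrix.fromRows Gh A))
    (Ct : Submodule F ((Fin n ⊕ Fin s) → F))
    (hemb : IsHullEmbE k C Ct t)
    (hgen : IsGenMat Ct
      (Matrix.fromCols (Matrix.fromRows Gh A) (Matrix.fromRows D₁ D₂)))
    (hshortest : ∀ (s' : ℕ) (Ct' : Submodule F ((Fin n ⊕ Fin s') → F)),
      IsHullEmbE k C Ct' t → s ≤ s') :
    D₁.rank = ℓ - t := by
  have hlb : ℓ ≤ Module.finrank F (hullE Ct) + D₁.rank :=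
    hull_dim_lb C Gh A D₁ D₂ hGh hGC Ct hgen
  rw [hemb.1] at hlb
  obtain ⟨Ct', hCt'⟩ := exists_short_emb C hk hℓ (le_of_lt ht) Gh A hGh hGC
  have hs : s ≤ ℓ - t := hshortest (ℓ - t) Ct' hCt'
  have hr : D₁.rank ≤ s := Matrix.rank_le_width D₁
  omega
end

section
/- Let C be an [n,k] linear code over F_q with ℓ = dim Hull_E(C) and let t be an integer with ℓ < t ≤ k. If the length of the shortest t-dimensional Euclidean hull embeddings of C is n + s, then s ≥ t − ℓ. Equivalently, for any generator matrix G of C and any k×s matrix D over F_q with rank((G|D)(G|D)ᵀ) = k − t, one has s ≥ t − ℓ. -/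
open Matrix

/-- Rank-hull relation: if `G` is a `k`-row generator matrix of `C`, then
`dim Hull_E(C) + rank (G * Gᵀ) = k`. -/
lemma hullE_finrank_add_rank {F : Type*} [Field F] {k : ℕ} {ι : Type*} [Fintype ι]
    (C : Submodule F (ι → F)) (G : Matrix (Fin k) ι F) (hG : IsGenMat C G) :
    Module.finrank F (hullE C) + (G * Gᵀ).rank = k := by
  obtain ⟨hind, hspan⟩ := hG
  have hrange : LinearMap.range G.vecMulLinear = C := by
    rw [range_vecMulLinear]; exact hspan
  have hinj : Function.Injective G.vecMulLinear := by
    rw [Matrix.coe_vecMulLinear]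
    exact Matrix.vecMul_injective_iff.mpr hind
  have hkey : hullE C =
      Submodule.map G.vecMulLinear (LinearMap.ker (G * Gᵀ).mulVecLin) := by
    ext v
    simp only [Submodule.mem_map]
    constructor
    · rintro ⟨hvC, hvD⟩
      rw [← hrange] at hvC
      obtain ⟨x, rfl⟩ := hvC
      refine ⟨x, ?_, rfl⟩
      rw [LinearMap.mem_ker, Matrix.mulVecLin_apply, ← Matrix.mulVec_mulVec,
        Matrix.mulVec_transpose]
      funext i
      exact hvD (G i) (hspan ▸ Submodule.subset_span ⟨i, rfl⟩)
    · rintro ⟨x, hx, rfl⟩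
      rw [LinearMap.mem_ker, Matrix.mulVecLin_apply] at hx
      refine ⟨hrange ▸ LinearMap.mem_range_self _ x, ?_⟩
      intro u hu
      rw [← hrange] at hu
      obtain ⟨y, rfl⟩ := hu
      have : G *ᵥ (G.vecMulLinear x) = 0 := by
        rw [Matrix.vecMulLinear_apply, ← Matrix.mulVec_transpose, Matrix.mulVec_mulVec]
        exact hx
      rw [Matrix.vecMulLinear_apply, ← dotProduct_mulVec,
        Matrix.vecMulLinear_apply (x := x), ← Matrix.mulVec_transpose,
        Matrix.mulVec_mulVec, hx, dotProduct_zero]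
  have h1 : Module.finrank F (hullE C) =
      Module.finrank F (LinearMap.ker (G * Gᵀ).mulVecLin) := by
    rw [hkey]
    exact (LinearEquiv.finrank_eq
      (Submodule.equivMapOfInjective G.vecMulLinear hinj _)).symm
  have h2 := LinearMap.finrank_range_add_finrank_ker (G * Gᵀ).mulVecLin
  rw [h1, Matrix.rank]
  rw [Module.finrank_pi, Fintype.card_fin] at h2
  omega

/-- `rank A ≤ rank (A + B) + rank B` for square matrices over a field. -/
lemma rank_le_rank_add_add_rank {F : Type*} [Field F] {k : ℕ}
    (A B : Matrix (Fin k) (Fin k) F) : A.rank ≤ (A + B).rank + B.rank := by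
  have hsum : ∀ (X Y : Matrix (Fin k) (Fin k) F), (X + Y).rank ≤ X.rank + Y.rank := by
    intro X Y
    have h : LinearMap.range (X + Y).mulVecLin ≤
        LinearMap.range X.mulVecLin ⊔ LinearMap.range Y.mulVecLin := by
      rw [Matrix.mulVecLin_add]
      rintro _ ⟨x, rfl⟩
      exact Submodule.mem_sup.2 ⟨_, ⟨x, rfl⟩, _, ⟨x, rfl⟩, by simp⟩
    calc (X + Y).rank ≤ Module.finrank F
          (LinearMap.range X.mulVecLin ⊔ LinearMap.range Y.mulVecLin : Submodule F _) :=
          Submodule.finrank_mono h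
      _ ≤ X.rank + Y.rank := Submodule.finrank_add_le_finrank_add_finrank _ _
  have hneg : (-B).rank = B.rank := by
    have hr : LinearMap.range (-B).mulVecLin = LinearMap.range B.mulVecLin := by
      ext v
      simp only [LinearMap.mem_range]
      constructor
      · rintro ⟨x, rfl⟩
        exact ⟨-x, by simp [Matrix.mulVecLin_apply, Matrix.neg_mulVec, Matrix.mulVec_neg]⟩
      · rintro ⟨x, rfl⟩
        exact ⟨-x, by simp [Matrix.mulVecLin_apply, Matrix.neg_mulVec, Matrix.mulVec_neg]⟩
    rw [Matrix.rank, Matrix.rank, hr]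
  calc A.rank = ((A + B) + (-B)).rank := by rw [add_assoc, add_neg_cancel, add_zero]
    _ ≤ (A + B).rank + (-B).rank := hsum _ _
    _ = (A + B).rank + B.rank := by rw [hneg]

/-- Let `C` be an `[n,k]` code over `F_q` with `ℓ = dim Hull_E(C)` and
`ℓ < t ≤ k`.  Any `t`-dimensional Euclidean hull embedding of `C` with `s` added
coordinates satisfies `s ≥ t - ℓ` (so in particular the shortest one does);
equivalently, for any generator matrix `G` of `C` and any `k × s` matrix `D` with
`rank ([G|D] * [G|D]ᵀ) = k - t`, one has `s ≥ t - ℓ`. -/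
theorem lower_bound_hullE_embedding {F : Type*} [Field F] [Fintype F] {n k ℓ t : ℕ}
    (C : Submodule F (Fin n → F)) (hk : Module.finrank F C = k)
    (hℓ : Module.finrank F (hullE C) = ℓ) (ht1 : ℓ < t) (ht2 : t ≤ k) :
    (∀ (s : ℕ) (Ct : Submodule F ((Fin n ⊕ Fin s) → F)),
      IsHullEmbE k C Ct t → t - ℓ ≤ s) ∧
    (∀ (s : ℕ) (G : Matrix (Fin k) (Fin n) F) (D : Matrix (Fin k) (Fin s) F),
      IsGenMat C G →
      (Matrix.fromCols G D * (Matrix.fromCols G D)ᵀ).rank = k - t → t - ℓ ≤ s) := by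
  have key : ∀ (s : ℕ) (G : Matrix (Fin k) (Fin n) F) (D : Matrix (Fin k) (Fin s) F),
      IsGenMat C G →
      (Matrix.fromCols G D * (Matrix.fromCols G D)ᵀ).rank = k - t → t - ℓ ≤ s := by
    intro s G D hG hrank
    have hG' := hullE_finrank_add_rank C G hG
    rw [hℓ] at hG'
    rw [Matrix.transpose_fromCols, Matrix.fromCols_mul_fromRows] at hrank
    have hD : (D * Dᵀ).rank ≤ s := by
      calc (D * Dᵀ).rank ≤ D.rank := Matrix.rank_mul_le_left D Dᵀ
        _ ≤ Fintype.card (Fin s) := Matrix.rank_le_card_width D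
        _ = s := Fintype.card_fin s
    have hle := rank_le_rank_add_add_rank (G * Gᵀ) (D * Dᵀ)
    rw [hrank] at hle
    omega
  refine ⟨?_, key⟩
  intro s Ct hEmb
  obtain ⟨hdim, G, D, hG, hGt⟩ := hEmb
  have h := hullE_finrank_add_rank Ct (Matrix.fromCols G D) hGt
  rw [hdim] at h
  exact key s G D hG (by omega)
end

section
/- Let q be a prime power, let C be an [n,k] linear code over F_{q^2} with ℓ = dim Hull_H(C), and let t be an integer with ℓ < t ≤ k. Then the length of the shortest t-dimensional Hermitian hull embeddings of C is n + t − ℓ. -/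
open Matrix

set_option linter.unusedSectionVars false
set_option maxHeartbeats 1000000

section Aux

variable {F : Type*} [Field F] [Fintype F] (p m : ℕ) [Fact p.Prime] [CharP F p]

lemma sig_sum {ι : Type*} (s : Finset ι) (f : ι → F) :
    (∑ i ∈ s, f i) ^ p ^ m = ∑ i ∈ s, f i ^ p ^ m := by
  simpa only [iterateFrobenius_def] using map_sum (iterateFrobenius F p m) f s

lemma sig_add (a b : F) : (a + b) ^ p ^ m = a ^ p ^ m + b ^ p ^ m := by
  simpa only [iterateFrobenius_def] using map_add (iterateFrobenius F p m) a b

variable (hcard : Fintype.card F = (p ^ m) ^ 2)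

include hcard in
lemma sig_sig (a : F) : (a ^ p ^ m) ^ p ^ m = a := by
  rw [← pow_mul, ← sq, ← hcard, FiniteField.pow_card]

include hcard in
lemma sig_inj (a b : F) (h : a ^ p ^ m = b ^ p ^ m) : a = b := by
  have := congrArg (· ^ p ^ m) h
  simpa only [sig_sig p m hcard] using this

end Aux

section Rank

variable {F : Type*} [Field F]

lemma mrank_add_le {k : ℕ} (A B : Matrix (Fin k) (Fin k) F) :
    (A + B).rank ≤ A.rank + B.rank := by
  rw [Matrix.rank, Matrix.rank, Matrix.rank, Matrix.mulVecLin_add]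
  have hle : LinearMap.range (A.mulVecLin + B.mulVecLin) ≤
      LinearMap.range A.mulVecLin ⊔ LinearMap.range B.mulVecLin := by
    rintro y ⟨x, rfl⟩
    exact Submodule.mem_sup.2 ⟨A.mulVecLin x, ⟨x, rfl⟩, B.mulVecLin x, ⟨x, rfl⟩, rfl⟩
  calc Module.finrank F (LinearMap.range (A.mulVecLin + B.mulVecLin))
      ≤ Module.finrank F ↑(LinearMap.range A.mulVecLin ⊔ LinearMap.range B.mulVecLin) :=
        Submodule.finrank_mono hle
    _ ≤ _ := by
        have := Submodule.finrank_sup_add_finrank_inf_eq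
          (LinearMap.range A.mulVecLin) (LinearMap.range B.mulVecLin)
        omega

lemma mrank_neg {k s : ℕ} (A : Matrix (Fin k) (Fin s) F) : (-A).rank = A.rank := by
  have h1 : (-A).mulVecLin = -A.mulVecLin := by
    ext x i
    simp [Matrix.mulVecLin_apply, Matrix.neg_mulVec]
  rw [Matrix.rank, Matrix.rank, h1, LinearMap.range_neg]

lemma mrank_nullity {k : ℕ} (A : Matrix (Fin k) (Fin k) F) :
    A.rank + Module.finrank F (LinearMap.ker A.mulVecLin) = k := by
  have := LinearMap.finrank_range_add_finrank_ker A.mulVecLin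
  rw [Module.finrank_fin_fun] at this
  rw [Matrix.rank]
  exact this

end Rank

section CardRank

variable {F : Type*} [Field F] [Fintype F]

lemma finrank_eq_of_nat_card_eq {V W : Type*} [AddCommGroup V] [Module F V]
    [AddCommGroup W] [Module F W] [Finite V] [Finite W]
    (h : Nat.card V = Nat.card W) : Module.finrank F V = Module.finrank F W := by
  have : Fintype V := Fintype.ofFinite V
  have : Fintype W := Fintype.ofFinite W
  rw [Nat.card_eq_fintype_card, Nat.card_eq_fintype_card,
    Module.card_eq_pow_finrank (K := F) (V := V), Module.card_eq_pow_finrank (K := F) (V := W)] at h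
  exact Nat.pow_right_injective Fintype.one_lt_card h

end CardRank

section LemmaL

variable {F : Type*} [Field F] [Fintype F] (p m : ℕ) [Fact p.Prime] [CharP F p]

/-- characterization of membership in the Hermitian dual via rows of a generator matrix. -/
lemma mem_dualH_iff {k : ℕ} {ι : Type*} [Fintype ι] (C : Submodule F (ι → F))
    (G : Matrix (Fin k) ι F) (hsp : Submodule.span F (Set.range fun i => G i) = C)
    (v : ι → F) :
    v ∈ dualH p m C ↔ ∀ j : Fin k, ∑ i, G j i * v i ^ p ^ m = 0 := by
  constructor
  · intro hv j
    exact hv (G j) (hsp ▸ Submodule.subset_span ⟨j, rfl⟩)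
  · intro h u hu
    rw [← hsp] at hu
    induction hu using Submodule.span_induction with
    | mem x hx => obtain ⟨j, rfl⟩ := hx; exact h j
    | zero => simp
    | add x y _ _ hx hy =>
      rw [show ∑ i, (x + y) i * v i ^ p ^ m
          = ∑ i, x i * v i ^ p ^ m + ∑ i, y i * v i ^ p ^ m by
        rw [← Finset.sum_add_distrib]; exact Finset.sum_congr rfl fun i _ => by
          simp [add_mul], hx, hy, add_zero]
    | smul c x _ hx =>
      rw [show ∑ i, (c • x) i * v i ^ p ^ m = c * ∑ i, x i * v i ^ p ^ m by
        rw [Finset.mul_sum]; exact Finset.sum_congr rfl fun i _ => by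
          simp [mul_assoc], hx, mul_zero]

variable (hcard : Fintype.card F = (p ^ m) ^ 2)

/-- The key computation: the Hermitian pairing of a row of `G` with a codeword `xG`. -/
lemma pairing_eq {k : ℕ} {ι : Type*} [Fintype ι]
    (G : Matrix (Fin k) ι F) (x : Fin k → F) (j : Fin k) :
    ∑ i, G j i * (Matrix.vecMul x G) i ^ p ^ m
      = (G * (G.map (· ^ p ^ m))ᵀ).mulVec (fun y => x y ^ p ^ m) j := by
  have expand : ∀ i, (Matrix.vecMul x G) i ^ p ^ m
      = ∑ y, x y ^ p ^ m * G y i ^ p ^ m := by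
    intro i
    rw [show (Matrix.vecMul x G) i = ∑ y, x y * G y i from rfl, sig_sum]
    exact Finset.sum_congr rfl fun y _ => mul_pow _ _ _
  calc ∑ i, G j i * (Matrix.vecMul x G) i ^ p ^ m
      = ∑ i, ∑ y, G j i * (x y ^ p ^ m * G y i ^ p ^ m) := by
        refine Finset.sum_congr rfl fun i _ => ?_
        rw [expand, Finset.mul_sum]
    _ = ∑ y, ∑ i, G j i * (x y ^ p ^ m * G y i ^ p ^ m) := Finset.sum_comm
    _ = ∑ y, (∑ i, G j i * G y i ^ p ^ m) * x y ^ p ^ m := by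
        refine Finset.sum_congr rfl fun y _ => ?_
        rw [Finset.sum_mul]
        exact Finset.sum_congr rfl fun i _ => by ring
    _ = _ := by
        simp only [Matrix.mulVec, dotProduct, Matrix.mul_apply,
          Matrix.transpose_apply, Matrix.map_apply]

include hcard in
/-- **Lemma L**: the hull dimension plus the rank of the Hermitian Gram matrix equals `k`. -/
lemma finrank_hullH_add_rank {k : ℕ} {ι : Type*} [Fintype ι] (C : Submodule F (ι → F))
    (G : Matrix (Fin k) ι F) (hli : LinearIndependent F (fun i => G i))
    (hsp : Submodule.span F (Set.range fun i => G i) = C) :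
    Module.finrank F (hullH p m C) + (G * (G.map (· ^ p ^ m))ᵀ).rank = k := by
  classical
  set A := G * (G.map (· ^ p ^ m))ᵀ with hA
  -- the bijection between the kernel of `A` and the hull
  have memC : ∀ x : Fin k → F, Matrix.vecMul x G ∈ C := by
    intro x
    rw [← hsp, show Matrix.vecMul x G = ∑ i, x i • G i by
      ext j; simp [Matrix.vecMul, dotProduct]]
    exact Submodule.sum_mem _ fun i _ =>
      Submodule.smul_mem _ _ (Submodule.subset_span ⟨i, rfl⟩)
  have vecMul_inj : ∀ x y : Fin k → F, Matrix.vecMul x G = Matrix.vecMul y G → x = y := by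
    intro x y hxy
    have h0 : ∑ i, (x - y) i • G i = 0 := by
      funext j
      simp only [Finset.sum_apply, Pi.sub_apply, Pi.smul_apply, smul_eq_mul, Pi.zero_apply,
        sub_mul, Finset.sum_sub_distrib]
      have hj := congrFun hxy j
      simp only [Matrix.vecMul, dotProduct] at hj
      rw [hj, sub_self]
    have := Fintype.linearIndependent_iff.1 hli (x - y) h0
    funext i
    have hi := this i
    simpa [sub_eq_zero] using hi
  have hmem : ∀ y : Fin k → F, A.mulVec y = 0 →
      Matrix.vecMul (fun i => y i ^ p ^ m) G ∈ hullH p m C := by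
    intro y hy
    refine Submodule.mem_inf.2 ⟨memC _, ?_⟩
    rw [mem_dualH_iff p m C G hsp]
    intro j
    rw [pairing_eq]
    have : (fun z => (fun i => y i ^ p ^ m) z ^ p ^ m) = y := by
      funext z; exact sig_sig p m hcard (y z)
    rw [this, hy]
    rfl
  let Φ : LinearMap.ker A.mulVecLin → hullH p m C := fun y =>
    ⟨Matrix.vecMul (fun i => (y : Fin k → F) i ^ p ^ m) G, hmem _ (y.2)⟩
  have hbij : Function.Bijective Φ := by
    constructor
    · intro y₁ y₂ h
      have := vecMul_inj _ _ (congrArg Subtype.val h)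
      ext i
      exact sig_inj p m hcard _ _ (congrFun this i)
    · rintro ⟨v, hv⟩
      obtain ⟨hvC, hvD⟩ := Submodule.mem_inf.1 hv
      rw [← hsp] at hvC
      obtain ⟨x, hx⟩ := (Submodule.mem_span_range_iff_exists_fun F).1 hvC
      have hxv : Matrix.vecMul x G = v := by
        rw [← hx]; ext j; simp [Matrix.vecMul, dotProduct]
      have hker : A.mulVec (fun i => x i ^ p ^ m) = 0 := by
        funext j
        have := (mem_dualH_iff p m C G hsp v).1 hvD j
        rw [← hxv] at this
        rw [← pairing_eq p m G x j, this]
        simp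
      refine ⟨⟨fun i => x i ^ p ^ m, hker⟩, ?_⟩
      apply Subtype.ext
      show Matrix.vecMul (fun i => (x i ^ p ^ m) ^ p ^ m) G = v
      rw [show (fun i => (x i ^ p ^ m) ^ p ^ m) = x by
        funext i; exact sig_sig p m hcard (x i)]
      exact hxv
  have hcardeq : Nat.card (hullH p m C) = Nat.card (LinearMap.ker A.mulVecLin) :=
    (Nat.card_eq_of_bijective Φ hbij).symm
  have := finrank_eq_of_nat_card_eq (F := F) hcardeq
  rw [this]
  have := mrank_nullity A
  omega

end LemmaL

section Herm

variable {F : Type*} [Field F] [Fintype F] (p m : ℕ) [Fact p.Prime] [CharP F p]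
variable (hm : 1 ≤ m) (hcard : Fintype.card F = (p ^ m) ^ 2)

include hm hcard in
/-- no nonzero element of `F` is fixed... rather: the Frobenius `x ↦ x ^ q` is not the
identity on `F` (since `F` has `q ^ 2` elements). -/
lemma exists_sig_ne : ¬ (∀ a : F, a ^ p ^ m = a) := by
  classical
  intro hgg
  obtain ⟨g, hg⟩ := IsCyclic.exists_generator (α := Fˣ)
  have horder : orderOf g = (p ^ m) * (p ^ m) - 1 := by
    rw [orderOf_eq_card_of_forall_mem_zpowers hg, Nat.card_eq_fintype_card,
      Fintype.card_units, hcard, sq]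
  have hq2 : 2 ≤ p ^ m := Nat.one_lt_pow (by omega) (Fact.out : p.Prime).one_lt
  have hgne : (g : F) ≠ 0 := Units.ne_zero g
  have hg1 : g ^ (p ^ m - 1) = 1 := by
    apply Units.ext
    have key : (g : F) ^ (p ^ m - 1) * g = 1 * g := by
      rw [one_mul, ← pow_succ, show p ^ m - 1 + 1 = p ^ m by omega]
      exact hgg g
    have := mul_right_cancel₀ hgne key
    simpa using this
  have hdvd := orderOf_dvd_of_pow_eq_one hg1
  rw [horder] at hdvd
  have hle : p ^ m * p ^ m - 1 ≤ p ^ m - 1 :=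
    Nat.le_of_dvd (by omega) hdvd
  have : p ^ m < p ^ m * p ^ m := by nlinarith
  omega

include hm hcard in
/-- surjectivity of the norm map onto the fixed field. -/
lemma exists_herm_norm_eq {lam : F} (h1 : lam ≠ 0) (h2 : lam ^ p ^ m = lam) :
    ∃ c : F, c * c ^ p ^ m = lam := by
  classical
  obtain ⟨g, hg⟩ := IsCyclic.exists_generator (α := Fˣ)
  have horder : orderOf g = (p ^ m) * (p ^ m) - 1 := by
    rw [orderOf_eq_card_of_forall_mem_zpowers hg, Nat.card_eq_fintype_card,
      Fintype.card_units, hcard, sq]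
  have hq2 : 2 ≤ p ^ m := Nat.one_lt_pow (by omega) (Fact.out : p.Prime).one_lt
  set u : Fˣ := Units.mk0 lam h1 with hu
  obtain ⟨n, hn⟩ : ∃ n : ℕ, g ^ n = u := by
    have := hg u
    rwa [← mem_powers_iff_mem_zpowers, Submonoid.mem_powers_iff] at this
  have hu1 : u ^ (p ^ m - 1) = 1 := by
    apply Units.ext
    have key : lam ^ (p ^ m - 1) * lam = 1 * lam := by
      rw [one_mul, ← pow_succ, show p ^ m - 1 + 1 = p ^ m by omega]
      exact h2
    have := mul_right_cancel₀ h1 key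
    simpa [hu] using this
  have hdvd : p ^ m * p ^ m - 1 ∣ n * (p ^ m - 1) := by
    rw [← horder]
    apply orderOf_dvd_of_pow_eq_one
    rw [pow_mul, hn]
    exact hu1
  have hfact : p ^ m * p ^ m - 1 = (p ^ m + 1) * (p ^ m - 1) := by
    obtain ⟨r, hr⟩ : ∃ r, p ^ m = r + 2 := ⟨p ^ m - 2, by omega⟩
    rw [hr, show r + 2 - 1 = r + 1 by omega]
    have : (r + 2 + 1) * (r + 1) + 1 = (r + 2) * (r + 2) := by ring
    omega
  rw [hfact] at hdvd
  obtain ⟨r, hr⟩ : (p ^ m + 1) ∣ n :=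
    (Nat.mul_dvd_mul_iff_right (show 0 < p ^ m - 1 by omega)).1 hdvd
  refine ⟨(g : F) ^ r, ?_⟩
  have e1 : (g : F) ^ r * ((g : F) ^ r) ^ p ^ m = (g : F) ^ n := by
    rw [← pow_mul, ← pow_add, hr]
    congr 1
    ring
  rw [e1, ← Units.val_pow_eq_pow_val, hn]
  simp [hu]

include hm hcard in
/-- a nonzero Hermitian matrix has an anisotropic vector. -/
lemma exists_anisotropic {k : ℕ} (B : Matrix (Fin k) (Fin k) F)
    (hH : ∀ i j, B j i = B i j ^ p ^ m) (hB : B ≠ 0) :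
    ∃ x : Fin k → F, x ⬝ᵥ B.mulVec (fun i => x i ^ p ^ m) ≠ 0 := by
  have hpm0 : p ^ m ≠ 0 := pow_ne_zero m (Fact.out : p.Prime).ne_zero
  by_contra hall
  push_neg at hall
  have heval : ∀ x : Fin k → F,
      x ⬝ᵥ B.mulVec (fun i => x i ^ p ^ m) = ∑ a, ∑ b, x a * (B a b * x b ^ p ^ m) := by
    intro x
    simp [dotProduct, Matrix.mulVec, Finset.mul_sum]
  have hdiag : ∀ i, B i i = 0 := by
    intro i
    have h := hall (fun a => if a = i then (1 : F) else 0)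
    rw [heval] at h
    simpa [apply_ite (· ^ p ^ m), zero_pow hpm0, mul_ite, ite_mul,
      Finset.sum_ite_eq', mul_comm] using h
  apply hB
  ext i j
  rcases eq_or_ne i j with rfl | hij
  · simpa using hdiag i
  · show B i j = 0
    by_contra hbeta
    -- cross evaluation
    have hcross : ∀ c : F, c ^ p ^ m * B i j + c * B j i = 0 := by
      intro c
      have h := hall (fun a => (if a = i then (1 : F) else 0) + (if a = j then c else 0))
      rw [heval] at h
      have hpow : ∀ a, ((if a = i then (1 : F) else 0) + (if a = j then c else 0)) ^ p ^ m
          = (if a = i then (1 : F) else 0) + (if a = j then c ^ p ^ m else 0) := by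
        intro a
        by_cases h1 : a = i
        · subst h1
          simp [hij, Ne.symm, (show a ≠ j from hij)]
        · by_cases h2 : a = j <;> simp [h1, h2, Ne.symm hij, zero_pow hpm0]
      simp only [hpow] at h
      simp only [mul_add, add_mul, mul_ite, ite_mul, zero_mul, mul_zero, one_mul, mul_one,
        Finset.sum_add_distrib, Finset.sum_ite_eq', Finset.mem_univ, if_true] at h
      rw [hdiag i, hdiag j] at h
      ring_nf at h ⊢
      linear_combination h
    have hγ : ∀ γ : F, γ + γ ^ p ^ m = 0 := by
      intro γ
      have hc := hcross ((γ * (B i j)⁻¹) ^ p ^ m)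
      rw [sig_sig p m hcard, hH i j, ← mul_pow, inv_mul_cancel_right₀ hbeta] at hc
      linear_combination hc
    have h2 : (1 : F) + 1 = 0 := by simpa using hγ 1
    apply exists_sig_ne p m hm hcard
    intro a
    have ha2 : a + a = 0 := by
      have := congrArg (· * a) h2
      simpa [add_mul] using this
    linear_combination hγ a - ha2

include hm hcard in
/-- the rank-reduction step: adding one suitable Hermitian rank-one matrix. -/
lemma herm_step {k : ℕ} (B : Matrix (Fin k) (Fin k) F)
    (hH : ∀ i j, B j i = B i j ^ p ^ m) (hB : B ≠ 0) :
    ∃ d : Fin k → F,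
      (∀ i j, (B + Matrix.of fun i j => d i * d j ^ p ^ m) j i
          = ((B + Matrix.of fun i j => d i * d j ^ p ^ m) i j) ^ p ^ m) ∧
      (B + Matrix.of fun i j => d i * d j ^ p ^ m).rank + 1 = B.rank := by
  obtain ⟨x, hα⟩ := exists_anisotropic p m hm hcard B hH hB
  set w : Fin k → F := B.mulVec (fun i => x i ^ p ^ m) with hwdef
  set α : F := x ⬝ᵥ w with hαdef
  have hxw : ∑ a, x a * w a = α := rfl
  -- σ-invariance of α
  have hσα : α ^ p ^ m = α := by
    have e1 : α = ∑ a, ∑ b, x a * (B a b * x b ^ p ^ m) := by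
      rw [hαdef]
      simp [dotProduct, hwdef, Matrix.mulVec, Finset.mul_sum]
    have e2 : α ^ p ^ m = ∑ a, ∑ b, x a ^ p ^ m * (B b a * x b) := by
      rw [e1, sig_sum]
      refine Finset.sum_congr rfl fun a _ => ?_
      rw [sig_sum]
      refine Finset.sum_congr rfl fun b _ => ?_
      rw [mul_pow, mul_pow, sig_sig p m hcard, ← hH a b]
    rw [e2, Finset.sum_comm, e1]
    refine Finset.sum_congr rfl fun b _ => Finset.sum_congr rfl fun a _ => by ring
  have hα0 : α ≠ 0 := hα
  set lam : F := -α⁻¹ with hlam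
  have hlam0 : lam ≠ 0 := by simp [hlam, inv_ne_zero hα0]
  have hlamσ : lam ^ p ^ m = lam := by
    have : (-α⁻¹ : F) ^ p ^ m = -(α⁻¹ ^ p ^ m) := by
      simpa only [iterateFrobenius_def] using map_neg (iterateFrobenius F p m) α⁻¹
    rw [hlam, this, inv_pow, hσα]
  obtain ⟨c, hc⟩ := exists_herm_norm_eq p m hm hcard hlam0 hlamσ
  set d : Fin k → F := fun i => c * w i with hd
  set R : Matrix (Fin k) (Fin k) F := Matrix.of fun i j => d i * d j ^ p ^ m with hR
  have hRval : ∀ i j, R i j = lam * (w i * w j ^ p ^ m) := by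
    intro i j
    show d i * d j ^ p ^ m = _
    rw [hd]
    simp only [mul_pow]
    rw [← hc]
    ring
  -- Hermitian property of B + R
  have hherm : ∀ i j, (B + R) j i = ((B + R) i j) ^ p ^ m := by
    intro i j
    rw [Matrix.add_apply, Matrix.add_apply, sig_add, ← hH i j, hRval, hRval]
    congr 1
    rw [mul_pow, mul_pow, sig_sig p m hcard, hlamσ]
    ring
  -- σ(w) expressed via B
  have hwσ : ∀ jj, w jj ^ p ^ m = ∑ a, B a jj * x a := by
    intro jj
    rw [hwdef]
    show (∑ b, B jj b * x b ^ p ^ m) ^ p ^ m = _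
    rw [sig_sum]
    refine Finset.sum_congr rfl fun b _ => ?_
    rw [mul_pow, sig_sig p m hcard, ← hH jj b]
  -- first kernel fact
  have k1 : ∀ v, B.mulVec v = 0 → (B + R).mulVec v = 0 := by
    intro v hv
    funext i
    have hsum : ∑ jj, w jj ^ p ^ m * v jj = 0 := by
      have e1 : ∑ jj, w jj ^ p ^ m * v jj = ∑ jj, ∑ a, B a jj * x a * v jj := by
        refine Finset.sum_congr rfl fun jj _ => ?_
        rw [hwσ, Finset.sum_mul]
      rw [e1, Finset.sum_comm]
      refine Finset.sum_eq_zero fun a _ => ?_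
      have hva : ∑ jj, B a jj * v jj = 0 := congrFun hv a
      calc ∑ jj, B a jj * x a * v jj = x a * ∑ jj, B a jj * v jj := by
            rw [Finset.mul_sum]
            exact Finset.sum_congr rfl fun jj _ => by ring
        _ = 0 := by rw [hva, mul_zero]
    have hRv : R.mulVec v i = 0 := by
      show ∑ jj, R i jj * v jj = 0
      calc ∑ jj, R i jj * v jj = lam * w i * ∑ jj, w jj ^ p ^ m * v jj := by
            rw [Finset.mul_sum]
            exact Finset.sum_congr rfl fun jj _ => by rw [hRval]; ring
        _ = 0 := by rw [hsum, mul_zero]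
    show (B + R).mulVec v i = 0
    rw [Matrix.add_mulVec]
    have : B.mulVec v i = 0 := congrFun hv i
    simp [this, hRv]
  -- second kernel fact
  have k2 : (B + R).mulVec (fun i => x i ^ p ^ m) = 0 := by
    funext i
    have hsum : ∑ jj, w jj ^ p ^ m * x jj ^ p ^ m = α := by
      calc ∑ jj, w jj ^ p ^ m * x jj ^ p ^ m = ∑ jj, (x jj * w jj) ^ p ^ m := by
            refine Finset.sum_congr rfl fun jj _ => by rw [mul_pow]; ring
        _ = (∑ jj, x jj * w jj) ^ p ^ m := (sig_sum p m _ _).symm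
        _ = α := by rw [hxw, hσα]
    have hRv : R.mulVec (fun i => x i ^ p ^ m) i = - w i := by
      show ∑ jj, R i jj * x jj ^ p ^ m = - w i
      calc ∑ jj, R i jj * x jj ^ p ^ m
          = lam * w i * ∑ jj, w jj ^ p ^ m * x jj ^ p ^ m := by
            rw [Finset.mul_sum]
            exact Finset.sum_congr rfl fun jj _ => by rw [hRval]; ring
        _ = - w i := by
            rw [hsum, hlam]
            field_simp
    show (B + R).mulVec (fun i => x i ^ p ^ m) i = 0
    rw [Matrix.add_mulVec]
    have hBv : B.mulVec (fun i => x i ^ p ^ m) i = w i := rfl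
    simp [hBv, hRv]
  -- the new kernel vector
  have hwne : w ≠ 0 := by
    intro h0
    apply hα0
    rw [hαdef, h0]
    simp [dotProduct]
  -- strict kernel inclusion
  have hlt : LinearMap.ker B.mulVecLin < LinearMap.ker (B + R).mulVecLin := by
    rw [SetLike.lt_iff_le_and_exists]
    constructor
    · intro v hv
      rw [LinearMap.mem_ker, Matrix.mulVecLin_apply] at hv ⊢
      exact k1 v hv
    · refine ⟨fun i => x i ^ p ^ m, ?_, ?_⟩
      · rw [LinearMap.mem_ker, Matrix.mulVecLin_apply]
        exact k2
      · rw [LinearMap.mem_ker, Matrix.mulVecLin_apply]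
        rw [← hwdef]
        exact hwne
  have hfr : Module.finrank F (LinearMap.ker B.mulVecLin)
      < Module.finrank F (LinearMap.ker (B + R).mulVecLin) :=
    Submodule.finrank_lt_finrank_of_lt hlt
  have hn1 := mrank_nullity B
  have hn2 := mrank_nullity (B + R)
  -- rank R ≤ 1
  have hRrank : R.rank ≤ 1 := by
    have hfac : R = (Matrix.of fun i (_ : Fin 1) => d i) *
        (Matrix.of fun (_ : Fin 1) j => d j ^ p ^ m) := by
      ext i j
      show d i * d j ^ p ^ m = _
      rw [Matrix.mul_apply, Fin.sum_univ_one]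
      rfl
    calc R.rank ≤ (Matrix.of fun (_ : Fin 1) j => d j ^ p ^ m : Matrix (Fin 1) (Fin k) F).rank := by
          rw [hfac]; exact Matrix.rank_mul_le_right _ _
      _ ≤ Fintype.card (Fin 1) := Matrix.rank_le_card_height _
      _ = 1 := by simp
  have hsub : B.rank ≤ (B + R).rank + 1 := by
    have hBeq : B = (B + R) + (-R) := by rw [add_neg_cancel_right]
    calc B.rank = ((B + R) + (-R)).rank := by rw [← hBeq]
      _ ≤ (B + R).rank + (-R).rank := mrank_add_le _ _
      _ ≤ (B + R).rank + 1 := by rw [mrank_neg]; omega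
  refine ⟨d, hherm, ?_⟩
  rw [← hR]
  omega

end Herm

section Reduce

variable {F : Type*} [Field F] [Fintype F] (p m : ℕ) [Fact p.Prime] [CharP F p]
variable (hm : 1 ≤ m) (hcard : Fintype.card F = (p ^ m) ^ 2)

lemma gram_apply' {k : ℕ} {ι : Type*} [Fintype ι] (D : Matrix (Fin k) ι F) (i j : Fin k) :
    (D * (D.map (· ^ p ^ m))ᵀ) i j = ∑ cc, D i cc * D j cc ^ p ^ m := by
  simp [Matrix.mul_apply]

include hcard in
lemma gram_herm {k : ℕ} {ι : Type*} [Fintype ι] (D : Matrix (Fin k) ι F) (i j : Fin k) :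
    (D * (D.map (· ^ p ^ m))ᵀ) j i = ((D * (D.map (· ^ p ^ m))ᵀ) i j) ^ p ^ m := by
  rw [gram_apply', gram_apply', sig_sum]
  refine Finset.sum_congr rfl fun cc _ => ?_
  rw [mul_pow, sig_sig p m hcard]
  ring

lemma gram_fromColumns {k n s : ℕ} (G : Matrix (Fin k) (Fin n) F)
    (D : Matrix (Fin k) (Fin s) F) :
    (Matrix.fromCols G D) * ((Matrix.fromCols G D).map (· ^ p ^ m))ᵀ
      = G * (G.map (· ^ p ^ m))ᵀ + D * (D.map (· ^ p ^ m))ᵀ := by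
  ext i j
  simp [Matrix.mul_apply, Fintype.sum_sum_type, Matrix.fromCols]

include hm hcard in
lemma herm_reduce {k : ℕ} (A : Matrix (Fin k) (Fin k) F)
    (hH : ∀ i j, A j i = A i j ^ p ^ m) :
    ∀ s : ℕ, s ≤ A.rank →
    ∃ D : Matrix (Fin k) (Fin s) F,
      (∀ i j, (A + D * (D.map (· ^ p ^ m))ᵀ) j i
          = ((A + D * (D.map (· ^ p ^ m))ᵀ) i j) ^ p ^ m) ∧
      (A + D * (D.map (· ^ p ^ m))ᵀ).rank + s = A.rank := by
  intro s
  induction s with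
  | zero =>
    intro _
    refine ⟨0, ?_, ?_⟩
    · have h0 : (0 : Matrix (Fin k) (Fin 0) F) * ((0 : Matrix (Fin k) (Fin 0) F).map
          (· ^ p ^ m))ᵀ = 0 := by
        ext i j
        simp [Matrix.mul_apply]
      rw [h0, add_zero]
      exact hH
    · have h0 : (0 : Matrix (Fin k) (Fin 0) F) * ((0 : Matrix (Fin k) (Fin 0) F).map
          (· ^ p ^ m))ᵀ = 0 := by
        ext i j
        simp [Matrix.mul_apply]
      rw [h0, add_zero, add_zero]
  | succ s ih =>
    intro hs
    obtain ⟨D, h1, h2⟩ := ih (by omega)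
    have hBne : A + D * (D.map (· ^ p ^ m))ᵀ ≠ 0 := by
      intro h0
      rw [h0, Matrix.rank_zero] at h2
      omega
    obtain ⟨d, hd1, hd2⟩ := herm_step p m hm hcard _ h1 hBne
    refine ⟨Matrix.of fun i => Fin.cons (d i) (D i), ?_, ?_⟩ <;>
    · have hgram : (Matrix.of fun i => Fin.cons (d i) (D i) : Matrix (Fin k) (Fin (s+1)) F) *
          ((Matrix.of fun i => Fin.cons (d i) (D i) : Matrix (Fin k) (Fin (s+1)) F).map
            (· ^ p ^ m))ᵀ
          = D * (D.map (· ^ p ^ m))ᵀ + Matrix.of (fun i j => d i * d j ^ p ^ m) := by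
        ext i j
        rw [gram_apply', Matrix.add_apply, gram_apply']
        show ∑ cc : Fin (s+1), Fin.cons (d i) (D i) cc * (Fin.cons (d j) (D j) cc) ^ p ^ m
            = (∑ cc : Fin s, D i cc * D j cc ^ p ^ m) + d i * d j ^ p ^ m
        rw [Fin.sum_univ_succ]
        simp only [Fin.cons_zero, Fin.cons_succ]
        exact add_comm _ _
      rw [hgram, ← add_assoc A]
      first
      | exact hd1
      | · rw [show (A + D * (D.map (· ^ p ^ m))ᵀ +
            Matrix.of (fun i j => d i * d j ^ p ^ m)).rank + (s + 1)
            = ((A + D * (D.map (· ^ p ^ m))ᵀ +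
              Matrix.of (fun i j => d i * d j ^ p ^ m)).rank + 1) + s by omega, hd2]
          exact h2

end Reduce

/-- Let `q = p ^ m` be a prime power, `C` an `[n,k]` code over
`F_{q^2}` with `ℓ = dim Hull_H(C)` and `ℓ < t ≤ k`.  Then the length of the shortest
`t`-dimensional Hermitian hull embeddings of `C` is `n + t - ℓ`. -/
theorem shortest_hullH_embedding_of_gt {F : Type*} [Field F] [Fintype F]
    (p m : ℕ) [Fact p.Prime] [CharP F p] (hm : 1 ≤ m)
    (hcard : Fintype.card F = (p ^ m) ^ 2)
    {n k ℓ t : ℕ} (C : Submodule F (Fin n → F)) (hk : Module.finrank F C = k)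
    (hℓ : Module.finrank F (hullH p m C) = ℓ) (ht1 : ℓ < t) (ht2 : t ≤ k) :
    IsLeast {s : ℕ | ∃ Ct : Submodule F ((Fin n ⊕ Fin s) → F), IsHullEmbH p m k C Ct t}
      (t - ℓ) := by
  classical
  constructor
  · -- membership: an embedding of length `t - ℓ` exists
    let b : Module.Basis (Fin k) F C := Module.finBasisOfFinrankEq F C hk
    let G : Matrix (Fin k) (Fin n) F := Matrix.of fun i j => (b i : Fin n → F) j
    have hli : LinearIndependent F (fun i => G i) := by
      have h := b.linearIndependent.map' C.subtype (Submodule.ker_subtype C)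
      exact h
    have hsp : Submodule.span F (Set.range fun i => G i) = C := by
      have himg : (Set.range fun i => G i) = C.subtype '' Set.range b := by
        ext v
        constructor
        · rintro ⟨i, rfl⟩; exact ⟨b i, ⟨i, rfl⟩, rfl⟩
        · rintro ⟨w, ⟨i, rfl⟩, rfl⟩; exact ⟨i, rfl⟩
      rw [himg, Submodule.span_image, Module.Basis.span_eq, Submodule.map_top,
        Submodule.range_subtype]
    have hLA := finrank_hullH_add_rank p m hcard C G hli hsp
    rw [hℓ] at hLA
    set A := G * (G.map (· ^ p ^ m))ᵀ with hA
    have hHA : ∀ i j, A j i = A i j ^ p ^ m := fun i j => gram_herm p m hcard G i j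
    obtain ⟨D, hD1, hD2⟩ := herm_reduce p m hm hcard A hHA (t - ℓ) (by omega)
    let M := Matrix.fromCols G D
    have hliM : LinearIndependent F (fun i => M i) := by
      apply LinearIndependent.of_comp (LinearMap.funLeft F F Sum.inl)
      have hcomp : (⇑(LinearMap.funLeft F F (Sum.inl : Fin n → Fin n ⊕ Fin (t - ℓ)))
          ∘ fun i => M i) = fun i => G i := rfl
      rw [hcomp]
      exact hli
    refine ⟨Submodule.span F (Set.range fun i => M i), ?_, G, D, ⟨hli, hsp⟩, hliM, rfl⟩
    have hLM := finrank_hullH_add_rank p m hcard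
      (Submodule.span F (Set.range fun i => M i)) M hliM rfl
    rw [show M * (M.map (· ^ p ^ m))ᵀ = A + D * (D.map (· ^ p ^ m))ᵀ from
      gram_fromColumns p m G D] at hLM
    omega
  · -- lower bound
    rintro s ⟨Ct, hfr, G, D, hGC, hGCt⟩
    obtain ⟨hliG, hspG⟩ := hGC
    obtain ⟨hliM, hspM⟩ := hGCt
    have hL1 := finrank_hullH_add_rank p m hcard C G hliG hspG
    rw [hℓ] at hL1
    have hL2 := finrank_hullH_add_rank p m hcard Ct (Matrix.fromCols G D) hliM hspM
    rw [hfr, gram_fromColumns p m G D] at hL2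
    set A := G * (G.map (· ^ p ^ m))ᵀ with hA
    set Bg := D * (D.map (· ^ p ^ m))ᵀ with hBg
    have hgr : Bg.rank ≤ s := by
      calc Bg.rank ≤ D.rank := by rw [hBg]; exact Matrix.rank_mul_le_left _ _
        _ ≤ Fintype.card (Fin s) := Matrix.rank_le_card_width D
        _ = s := Fintype.card_fin s
    have hsub : A.rank ≤ (A + Bg).rank + Bg.rank := by
      have hBeq : A = (A + Bg) + (-Bg) := by rw [add_neg_cancel_right]
      calc A.rank = ((A + Bg) + (-Bg)).rank := by rw [← hBeq]
        _ ≤ (A + Bg).rank + (-Bg).rank := mrank_add_le _ _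
        _ = (A + Bg).rank + Bg.rank := by rw [mrank_neg]
    omega
end

section
/- Let q be an odd prime power and let G be an invertible symmetric n×n matrix over F_q. Then there exists an invertible n×n matrix B over F_q such that G = B Bᵀ if and only if det(G) is a nonzero square in F_q. -/
open Matrix Function

/-!
Both sides are invariants of congruence `G ↦ P G Pᵀ`: the left side says `G` is congruent
to `1`, and congruence multiplies the determinant by a nonzero square. Conversely, in odd
characteristic a symmetric matrix is congruent to a diagonal one, and over a finite field of
odd order every binary form `a x² + b y²` with `a b ≠ 0` represents `1`, so `diag(a, b)` is
congruent to `diag(a b, 1)`. Merging the diagonal entries one at a time leaves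
`diag(c, 1, …, 1)` with `c ≡ det G` modulo squares, and this is
congruent to `1` once `c` is a square.
-/

namespace FiniteField

variable {F : Type*} [Field F] [Fintype F]

theorem exists_mul_sq_add_mul_sq_eq_one (hF : Odd (Fintype.card F)) {a b : F} (ha : a ≠ 0)
    (hb : b ≠ 0) : ∃ x y : F, a * x ^ 2 + b * y ^ 2 = 1 := by
  open Polynomial in
  obtain ⟨x, y, hxy⟩ := exists_root_sum_quadratic (f := C a * X ^ 2 + C 0 * X + C (-1))
    (g := C b * X ^ 2 + C 0 * X + C 0) (degree_quadratic ha) (degree_quadratic hb)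
    (Nat.odd_iff.mp hF)
  refine ⟨x, y, ?_⟩
  simp only [eval_add, eval_mul, eval_C, eval_pow, eval_X] at hxy
  linear_combination hxy

end FiniteField

namespace Matrix

section CommRing

variable {ι R : Type*} [Fintype ι] [DecidableEq ι] [CommRing R]

def Congruent (A B : Matrix ι ι R) : Prop :=
  ∃ P : Matrix ι ι R, IsUnit P ∧ P * A * Pᵀ = B

namespace Congruent

variable {A B C : Matrix ι ι R}

theorem refl (A : Matrix ι ι R) : Congruent A A :=
  ⟨1, isUnit_one, by simp⟩

theorem symm : Congruent A B → Congruent B A := by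
  rintro ⟨P, hP, rfl⟩
  have hPdet : IsUnit P.det := (isUnit_iff_isUnit_det P).mp hP
  have hPtdet : IsUnit Pᵀ.det := by rwa [det_transpose]
  refine ⟨P⁻¹, isUnit_nonsing_inv_iff.mpr hP, ?_⟩
  rw [transpose_nonsing_inv, ← Matrix.mul_assoc, ← Matrix.mul_assoc, nonsing_inv_mul _ hPdet,
    Matrix.one_mul, Matrix.mul_assoc, mul_nonsing_inv _ hPtdet, Matrix.mul_one]

theorem trans : Congruent A B → Congruent B C → Congruent A C := by
  rintro ⟨P, hP, rfl⟩ ⟨Q, hQ, rfl⟩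
  exact ⟨Q * P, hQ.mul hP, by simp only [transpose_mul, Matrix.mul_assoc]⟩

theorem exists_det_eq_sq_mul (h : Congruent A B) :
    ∃ u : R, IsUnit u ∧ B.det = u ^ 2 * A.det := by
  obtain ⟨P, hP, rfl⟩ := h
  exact ⟨P.det, (isUnit_iff_isUnit_det P).mp hP, by rw [det_mul, det_mul, det_transpose]; ring⟩

end Congruent

theorem one_congruent_diagonal_update_sq (i : ι) {c : R} (hc : IsUnit c) :
    Congruent 1 (diagonal (update 1 i (c ^ 2))) := by
  refine ⟨diagonal (update 1 i c), isUnit_diagonal.mpr (Pi.isUnit_iff.mpr fun k => ?_), ?_⟩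
  · rcases eq_or_ne k i with rfl | hk <;> simp [*]
  · rw [Matrix.mul_one, diagonal_transpose, diagonal_mul_diagonal]
    congr 1
    ext k
    rcases eq_or_ne k i with rfl | hk <;> simp [sq, *]

/-- In the coordinates `i, j` the congruence is by `[[-d j y, d i x], [x, y]]`, whose inverse
is `[[-y, d i x], [x, d j y]]`. -/
theorem diagonal_congruent_update_update {i j : ι} (hij : i ≠ j) (d : ι → R) {x y : R}
    (hxy : d i * x ^ 2 + d j * y ^ 2 = 1) :
    Congruent (diagonal d) (diagonal (update (update d i (d i * d j)) j 1)) := by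
  have trichotomy : ∀ k, k = i ∨ k = j ∨ (k ≠ i ∧ k ≠ j) := by tauto
  let P : Matrix ι ι R := of fun k =>
    if k = i then Pi.single i (-(d j * y)) + Pi.single j (d i * x)
    else if k = j then Pi.single i x + Pi.single j y else Pi.single k 1
  let Q : Matrix ι ι R := of fun k =>
    if k = i then Pi.single i (-y) + Pi.single j (d i * x)
    else if k = j then Pi.single i x + Pi.single j (d j * y) else Pi.single k 1
  have hQP : Q * P = 1 := by
    ext k l
    simp only [mul_apply, P, Q, of_apply, one_apply]
    rcases trichotomy k with rfl | rfl | ⟨hki, hkj⟩ <;>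
      rcases trichotomy l with rfl | rfl | ⟨hli, hlj⟩ <;>
      simp [Pi.single_apply, Finset.sum_add_distrib, add_mul, hij.symm, *] <;> grind
  refine ⟨P, .of_mul_eq_one_right Q hQP, ?_⟩
  ext k l
  simp only [mul_apply, transpose_apply, P, of_apply, diagonal_apply]
  rcases trichotomy k with rfl | rfl | ⟨hki, hkj⟩ <;>
    rcases trichotomy l with rfl | rfl | ⟨hli, hlj⟩ <;>
    simp [Pi.single_apply, Finset.sum_add_distrib, add_mul, mul_add, hij.symm, *] <;> grind

end CommRing

section Field

variable {ι F : Type*} [Fintype ι] [DecidableEq ι] [Field F]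

theorem IsSymm.exists_congruent_diagonal [Invertible (2 : F)] {G : Matrix ι ι F}
    (hG : G.IsSymm) :
    ∃ d : ι → F, Congruent G (diagonal d) := by
  obtain ⟨v, hv⟩ := LinearMap.BilinForm.exists_orthogonal_basis
    (LinearMap.BilinForm.isSymm_iff.mp (isSymm_toBilin'_iff_isSymm.mpr hG))
  set e := v.indexEquiv (Pi.basisFun F ι)
  set w := v.reindex e
  have hw : ∀ i j, i ≠ j → toBilin' G (w i) (w j) = 0 := fun i j hij => by
    rw [Module.Basis.reindex_apply, Module.Basis.reindex_apply]
    exact hv (e.symm.injective.ne hij)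
  set Q := (Pi.basisFun F ι).toMatrix w
  have hQ : Qᵀ * G * Q = LinearMap.BilinForm.toMatrix w (toBilin' G) := by
    have := LinearMap.BilinForm.toMatrix_mul_basis_toMatrix (Pi.basisFun F ι) w (toBilin' G)
    rwa [LinearMap.BilinForm.toMatrix_basisFun, LinearMap.BilinForm.toMatrix'_toBilin'] at this
  have hQunit : IsUnit Q :=
    @isUnit_of_invertible _ _ _ ((Pi.basisFun F ι).invertibleToMatrix w)
  refine ⟨fun i => toBilin' G (w i) (w i), Qᵀ, (isUnit_transpose Q).mpr hQunit, ?_⟩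
  rw [transpose_transpose, hQ]
  ext i j
  rw [LinearMap.BilinForm.toMatrix_apply, diagonal_apply]
  split_ifs with hij
  · rw [hij]
  · exact hw i j hij

variable [Fintype F]

theorem exists_diagonal_congruent_update_one (hF : Odd (Fintype.card F)) (i : ι) {d : ι → F}
    (hd : ∀ k, d k ≠ 0) : ∃ c, Congruent (diagonal d) (diagonal (update 1 i c)) := by
  suffices key : ∀ (s : Finset ι) (d : ι → F), (∀ k, d k ≠ 0) →
      (∀ k ∉ s, k ≠ i → d k = 1) →
      ∃ c, Congruent (diagonal d) (diagonal (update 1 i c)) from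
    key Finset.univ d hd fun k hk => absurd (Finset.mem_univ k) hk
  intro s
  induction s using Finset.induction_on with
  | empty =>
    intro d _ hd1
    refine ⟨d i, ?_⟩
    convert Congruent.refl (diagonal d) using 2
    ext k
    rcases eq_or_ne k i with rfl | hk
    · simp
    · simp [hk, hd1 k (Finset.notMem_empty k) hk]
  | insert j s hjs ih =>
    intro d hd hd1
    rcases eq_or_ne j i with rfl | hji
    · exact ih d hd fun k hks hkj => hd1 k (by simp [hks, hkj]) hkj
    obtain ⟨x, y, hxy⟩ := FiniteField.exists_mul_sq_add_mul_sq_eq_one hF (hd i) (hd j)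
    have hd' : ∀ k, update (update d i (d i * d j)) j 1 k ≠ 0 := fun k => by
      simp only [update_apply]
      split_ifs
      exacts [one_ne_zero, mul_ne_zero (hd i) (hd j), hd k]
    have hd1' : ∀ k ∉ s, k ≠ i → update (update d i (d i * d j)) j 1 k = 1 :=
      fun k hks hki => by
        rcases eq_or_ne k j with rfl | hkj
        · simp
        · simp [hkj, hki, hd1 k (by simp [hks, hkj]) hki]
    obtain ⟨c, hc⟩ := ih _ hd' hd1'
    exact ⟨c, (diagonal_congruent_update_update hji.symm d hxy).trans hc⟩

theorem IsSymm.exists_congruent_diagonal_update_one (hF : Odd (Fintype.card F))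
    {G : Matrix ι ι F} (hG : G.IsSymm) (hGunit : IsUnit G) (i : ι) :
    ∃ c, Congruent G (diagonal (update 1 i c)) := by
  have hchar : ringChar F ≠ 2 := fun h =>
    Nat.not_even_iff_odd.mpr hF (Nat.even_iff.mpr (FiniteField.even_card_iff_char_two.mp h))
  let _ : Invertible (2 : F) := invertibleOfNonzero (Ring.two_ne_zero hchar)
  obtain ⟨d, hGd⟩ := hG.exists_congruent_diagonal
  obtain ⟨u, hu, hdet⟩ := hGd.exists_det_eq_sq_mul
  have hd : ∀ k, d k ≠ 0 := by
    have : (diagonal d).det ≠ 0 := by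
      rw [hdet]
      exact mul_ne_zero (pow_ne_zero 2 hu.ne_zero) ((isUnit_iff_isUnit_det G).mp hGunit).ne_zero
    simpa [det_diagonal, Finset.prod_ne_zero_iff] using this
  obtain ⟨c, hdc⟩ := exists_diagonal_congruent_update_one hF i hd
  exact ⟨c, hGd.trans hdc⟩

end Field

end Matrix

/-- Let `q` be an odd prime power and `G` an invertible symmetric
`n × n` matrix over `F_q`.  Then there is an invertible matrix `B` with `G = B * Bᵀ`
if and only if `det G` is a nonzero square in `F_q`. -/
theorem factor_symmetric_iff_det_square {F : Type*} [Field F] [Fintype F]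
    (hodd : Odd (Fintype.card F))
    {n : ℕ} (G : Matrix (Fin n) (Fin n) F) (hsymm : G.IsSymm) (hinv : IsUnit G) :
    (∃ B : Matrix (Fin n) (Fin n) F, IsUnit B ∧ G = B * Bᵀ) ↔
      ∃ a : F, a ≠ 0 ∧ G.det = a ^ 2 := by
  constructor
  · rintro ⟨B, hB, rfl⟩
    exact ⟨B.det, ((isUnit_iff_isUnit_det B).mp hB).ne_zero, by rw [det_mul, det_transpose, sq]⟩
  · rintro ⟨a, ha, hdet⟩
    rcases isEmpty_or_nonempty (Fin n) with _ | ⟨⟨i⟩⟩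
    · exact ⟨1, isUnit_one, Subsingleton.elim _ _⟩
    obtain ⟨c, hGc⟩ := hsymm.exists_congruent_diagonal_update_one hodd hinv i
    obtain ⟨u, hu, hc⟩ := hGc.exists_det_eq_sq_mul
    have hc_sq : c = (u * a) ^ 2 := by
      simpa [det_diagonal, Finset.prod_update_of_mem, hdet, mul_pow] using hc
    rw [hc_sq] at hGc
    obtain ⟨B, hB, hBG⟩ :=
      (one_congruent_diagonal_update_sq i (hu.mul ha.isUnit)).trans hGc.symm
    exact ⟨B, hB, by rw [← hBG, Matrix.mul_one]⟩
end

section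
/- Let q = 2^m and let P be a k×s matrix over F_q such that P Pᵀ is alternating (i.e., every diagonal entry of P Pᵀ is zero). Then rank(P Pᵀ) ≤ s − 1. -/
open Matrix

/-- A square matrix is alternating if its diagonal vanishes and it is antisymmetric. -/
def IsAltMat {F : Type*} [Field F] {κ : Type*} (M : Matrix κ κ F) : Prop :=
  (∀ i, M i i = 0) ∧ ∀ i j, M i j = - M j i

/-- Let `q = 2 ^ m` and let `P` be a `k × s` matrix over `F_q` such
that `P * Pᵀ` is alternating.  Then `rank (P * Pᵀ) ≤ s - 1`. -/
theorem rank_le_of_mul_transpose_alternating {F : Type*} [Field F] [Fintype F]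
    (m : ℕ) (hm : 0 < m) (hcard : Fintype.card F = 2 ^ m)
    {k s : ℕ} (P : Matrix (Fin k) (Fin s) F) (halt : IsAltMat (P * Pᵀ)) :
    (P * Pᵀ).rank ≤ s - 1 := by
  -- characteristic 2
  have h2 : (2 : F) = 0 := by
    have hc := FiniteField.cast_card_eq_zero F
    rw [hcard] at hc
    push_cast at hc
    exact pow_eq_zero_iff hm.ne' |>.mp hc
  haveI : CharP F 2 :=
    (CharP.charP_iff_prime_eq_zero Nat.prime_two).mpr h2
  -- rows of P lie in the hyperplane of vectors summing to zero
  have hrow : ∀ i, ∑ j, P i j = 0 := by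
    intro i
    have hd : (∑ j, P i j * P i j) = 0 := by
      have := halt.1 i
      simpa [Matrix.mul_apply, Matrix.transpose_apply] using this
    have hsq : (∑ j, P i j) ^ 2 = 0 := by
      rw [sum_pow_char]
      simpa [sq] using hd
    exact pow_eq_zero_iff (two_ne_zero) |>.mp hsq
  rcases Nat.eq_zero_or_pos s with hs | hs
  · subst hs
    have h0 : (P * Pᵀ).rank ≤ 0 := by
      simp
    omega
  · -- the all-ones vector is in the kernel of P
    have hker : P.mulVec (fun _ => 1) = 0 := by
      funext i
      simpa [Matrix.mulVec, dotProduct] using hrow i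
    have hrankP : P.rank ≤ s - 1 := by
      have hrn := LinearMap.finrank_range_add_finrank_ker P.mulVecLin
      rw [Module.finrank_pi] at hrn
      have hkpos : 0 < Module.finrank F (LinearMap.ker P.mulVecLin) := by
        rw [Module.finrank_pos_iff]
        refine ⟨⟨fun _ => 1, by simpa [Matrix.mulVecLin_apply] using hker⟩, 0, ?_⟩
        intro h
        have := congrFun (congrArg Subtype.val h) ⟨0, hs⟩
        simp at this
      have : Matrix.rank P + 1 ≤ s := by
        have : Matrix.rank P + 1 ≤
            Module.finrank F (LinearMap.range P.mulVecLin) +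
              Module.finrank F (LinearMap.ker P.mulVecLin) := by
          exact Nat.add_le_add le_rfl hkpos
        simpa [Matrix.rank, Fintype.card_fin] using this.trans hrn.le
      omega
    exact (Matrix.rank_mul_le_left P Pᵀ).trans hrankP
end

section
/- Let q = 2^m and let C be an [n,k] linear code over F_q of type (E_{e,a}), with ℓ = dim Hull_E(C) and ℓ < t ≤ k. If the length of the shortest t-dimensional Euclidean hull embeddings of C is n + s, then s ≥ t − ℓ + 1. -/
open Matrix

lemma vecMul_eq_sum_smul {F : Type*} [Field F] {k : ℕ} {ι : Type*} [Fintype ι]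
    (a : Fin k → F) (N : Matrix (Fin k) ι F) : a ᵥ* N = ∑ i, a i • N i := by
  ext j
  simp [Matrix.vecMul, dotProduct, Finset.sum_apply]

lemma finrank_dualE_add {F : Type*} [Field F] {ι : Type*} [Fintype ι]
    (U : Submodule F (ι → F)) :
    Module.finrank F U + Module.finrank F (dualE U) = Fintype.card ι := by
  classical
  let Φ : (ι → F) →ₗ[F] Module.Dual F U :=
    { toFun := fun v =>
        { toFun := fun u => (u : ι → F) ⬝ᵥ v
          map_add' := fun x y => by simp [add_dotProduct]
          map_smul' := fun c x => by simp [smul_dotProduct] }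
      map_add' := fun x y => by
        ext u; simp [dotProduct_add]
      map_smul' := fun c x => by
        ext u; simp [dotProduct_smul] }
  have hker : LinearMap.ker Φ = dualE U := by
    ext v
    simp only [LinearMap.mem_ker]
    constructor
    · intro hv u hu
      have := DFunLike.congr_fun hv ⟨u, hu⟩
      simpa [Φ] using this
    · intro hv
      ext u
      simpa [Φ] using hv u u.2
  have hsurj : Function.Surjective Φ := by
    intro ψ
    obtain ⟨gext, hg⟩ := LinearMap.exists_extend ψ
    set e : ι → (ι → F) := fun i => Pi.single i 1 with he
    refine ⟨fun i => gext (e i), ?_⟩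
    ext u
    have h2 : ∀ i, (u : ι → F) i • e i = (Pi.single i ((u : ι → F) i) : ι → F) := by
      intro i
      rw [he]
      rw [← Pi.single_smul, smul_eq_mul, mul_one]
    have h3 : (∑ i, (u : ι → F) i • e i) = (u : ι → F) := by
      simp_rw [h2]; exact Finset.univ_sum_single _
    calc Φ (fun i => gext (e i)) u
        = ∑ i, (u : ι → F) i * gext (e i) := rfl
      _ = ∑ i, gext ((u : ι → F) i • e i) :=
          Finset.sum_congr rfl (fun i _ => by rw [_root_.map_smul, smul_eq_mul])
      _ = gext (∑ i, (u : ι → F) i • e i) := (map_sum gext _ _).symm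
      _ = gext (u : ι → F) := by rw [h3]
      _ = ψ u := by
          have := DFunLike.congr_fun hg u
          simpa using this
  have h1 := LinearMap.finrank_range_add_finrank_ker Φ
  rw [LinearMap.range_eq_top.mpr hsurj, hker, finrank_top, Subspace.dual_finrank_eq,
    Module.finrank_pi] at h1
  exact h1

lemma hull_finrank_eq {F : Type*} [Field F] {k : ℕ} {ι : Type*} [Fintype ι]
    (N : Matrix (Fin k) ι F) (hind : LinearIndependent F (fun i => N i)) :
    Module.finrank F (hullE (Submodule.span F (Set.range fun i => N i))) =
      Module.finrank F (LinearMap.ker (N * Nᵀ).mulVecLin) := by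
  classical
  set C' := Submodule.span F (Set.range fun i => N i) with hC'
  have key : ∀ a : (Fin k → F), a ∈ LinearMap.ker (N * Nᵀ).mulVecLin →
      Nᵀ *ᵥ a ∈ hullE C' := by
    intro a ha
    rw [LinearMap.mem_ker, Matrix.mulVecLin_apply] at ha
    refine Submodule.mem_inf.mpr ⟨?_, ?_⟩
    · rw [Matrix.mulVec_transpose, vecMul_eq_sum_smul]
      exact Submodule.sum_mem _ fun i _ =>
        Submodule.smul_mem _ _ (Submodule.subset_span ⟨i, rfl⟩)
    · intro u hu
      obtain ⟨c, hc⟩ := (Submodule.mem_span_range_iff_exists_fun F).mp hu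
      rw [← hc, ← vecMul_eq_sum_smul, ← Matrix.dotProduct_mulVec, Matrix.mulVec_mulVec,
        ha, dotProduct_zero]
  let e : LinearMap.ker (N * Nᵀ).mulVecLin →ₗ[F] hullE C' :=
    LinearMap.codRestrict _ (Nᵀ.mulVecLin ∘ₗ (LinearMap.ker (N * Nᵀ).mulVecLin).subtype)
      (fun a => by
        rw [LinearMap.comp_apply, Matrix.mulVecLin_apply]
        exact key a.1 a.2)
  have hinj : Function.Injective e := by
    intro a b hab
    have h' : Nᵀ *ᵥ (a : Fin k → F) = Nᵀ *ᵥ (b : Fin k → F) := Subtype.ext_iff.mp hab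
    have hz0 : Nᵀ *ᵥ ((a : Fin k → F) - (b : Fin k → F)) = 0 := by
      rw [Matrix.mulVec_sub, h', sub_self]
    have hz : ∑ i, ((a : Fin k → F) - (b : Fin k → F)) i • N i = 0 := by
      rw [← vecMul_eq_sum_smul, ← Matrix.mulVec_transpose]
      exact hz0
    have hco := Fintype.linearIndependent_iff.mp hind _ hz
    apply Subtype.ext
    funext i
    exact sub_eq_zero.mp (hco i)
  have hsurj : Function.Surjective e := by
    rintro ⟨x, hx⟩
    obtain ⟨hx1, hx2⟩ := Submodule.mem_inf.mp hx
    obtain ⟨c, hc⟩ := (Submodule.mem_span_range_iff_exists_fun F).mp hx1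
    have hcx : Nᵀ *ᵥ c = x := by rw [Matrix.mulVec_transpose, vecMul_eq_sum_smul]; exact hc
    have hck : c ∈ LinearMap.ker (N * Nᵀ).mulVecLin := by
      rw [LinearMap.mem_ker, Matrix.mulVecLin_apply, ← Matrix.mulVec_mulVec, hcx]
      funext i
      simpa [Matrix.mulVec, dotProduct] using hx2 (N i) (Submodule.subset_span ⟨i, rfl⟩)
    exact ⟨⟨c, hck⟩, Subtype.ext hcx⟩
  exact (LinearEquiv.ofBijective e ⟨hinj, hsurj⟩).finrank_eq.symm

lemma dotProduct_self_eq_sq {F : Type*} [Field F] {ι : Type*} [Fintype ι] [CharP F 2]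
    (y : ι → F) :
    y ⬝ᵥ y = (y ⬝ᵥ fun _ => 1) * (y ⬝ᵥ fun _ => 1) := by
  simp only [dotProduct, mul_one]
  exact (CharTwo.sum_mul_self _ _).symm

lemma quad_eq_sq {F : Type*} [Field F] {k : ℕ} {ι : Type*} [Fintype ι] [CharP F 2]
    (A : Matrix (Fin k) ι F) (v : Fin k → F) :
    v ⬝ᵥ ((A * Aᵀ) *ᵥ v) = ((v ᵥ* A) ⬝ᵥ fun _ => 1) * ((v ᵥ* A) ⬝ᵥ fun _ => 1) := by
  rw [← Matrix.mulVec_mulVec, Matrix.dotProduct_mulVec, Matrix.mulVec_transpose,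
    dotProduct_self_eq_sq]

/-- Let `q = 2 ^ m` and let `C` be an `[n,k]` code over `F_q` of type
`(E_{e,a})` (i.e. `G * Gᵀ` is alternating for a generator matrix `G`), with
`ℓ = dim Hull_E(C)` and `ℓ < t ≤ k`.  Then any `t`-dimensional Euclidean hull embedding
of `C` adds at least `t - ℓ + 1` coordinates; in particular, if the length of the
shortest such embedding is `n + s`, then `s ≥ t - ℓ + 1`. -/
theorem lower_bound_type_Eea {F : Type*} [Field F] [Fintype F]
    (m : ℕ) (hm : 0 < m) (hcard : Fintype.card F = 2 ^ m)
    {n k ℓ t : ℕ} (C : Submodule F (Fin n → F)) (hk : Module.finrank F C = k)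
    (G : Matrix (Fin k) (Fin n) F) (hG : IsGenMat C G)
    (htype : IsAltMat (G * Gᵀ))
    (hℓ : Module.finrank F (hullE C) = ℓ) (ht1 : ℓ < t) (ht2 : t ≤ k) :
    ∀ (s : ℕ) (Ct : Submodule F ((Fin n ⊕ Fin s) → F)),
      IsHullEmbE k C Ct t → t - ℓ + 1 ≤ s := by
  classical
  -- characteristic 2
  haveI hp : CharP F (ringChar F) := ringChar.charP F
  obtain ⟨n1, hprime, hcard2⟩ := FiniteField.card F (ringChar F)
  have hchar2 : ringChar F = 2 := by
    have h2 : ringChar F ∣ 2 ^ m := by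
      rw [← hcard, hcard2]
      exact dvd_pow_self _ (Nat.pos_iff_ne_zero.mp n1.pos)
    exact (Nat.prime_dvd_prime_iff_eq hprime Nat.prime_two).mp (hprime.dvd_of_dvd_pow h2)
  haveI hchar : CharP F 2 := hchar2 ▸ hp
  -- coordinate sums of codewords vanish
  have hrow : ∀ i, G i ⬝ᵥ (fun _ => (1:F)) = 0 := by
    intro i
    have hdiag : ∑ j, G i j * G i j = 0 := by
      simpa [Matrix.mul_apply] using htype.1 i
    have h0 : (∑ j, G i j) = 0 := by
      apply mul_self_eq_zero.mp
      rw [CharTwo.sum_mul_self]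
      exact hdiag
    simpa [dotProduct] using h0
  have hsum0 : ∀ c ∈ C, c ⬝ᵥ (fun _ => (1:F)) = 0 := by
    intro c hc
    rw [← hG.2] at hc
    induction hc using Submodule.span_induction with
    | mem x hx => obtain ⟨i, rfl⟩ := hx; exact hrow i
    | zero => simp
    | add x y hx hy ihx ihy => rw [add_dotProduct, ihx, ihy, add_zero]
    | smul a x hx ih => rw [smul_dotProduct, ih, smul_zero]
  intro s Ct hemb
  by_contra hcon
  push_neg at hcon
  have hsle : s ≤ t - ℓ := by omega
  obtain ⟨hhull, G', D, hG', hN⟩ := hemb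
  set N := Matrix.fromCols G' D with hNdef
  have hNNT : N * Nᵀ = G' * G'ᵀ + D * Dᵀ := by
    rw [hNdef, Matrix.transpose_fromCols, Matrix.fromCols_mul_fromRows]
  have hkerh : Module.finrank F (LinearMap.ker (G' * G'ᵀ).mulVecLin) = ℓ := by
    rw [← hull_finrank_eq G' hG'.1, hG'.2]
    exact hℓ
  have hkerf : Module.finrank F (LinearMap.ker (N * Nᵀ).mulVecLin) = t := by
    rw [← hull_finrank_eq N hN.1, hN.2]
    exact hhull
  set h := (G' * G'ᵀ).mulVecLin with hh
  set g := (D * Dᵀ).mulVecLin with hgdef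
  set f := (N * Nᵀ).mulVecLin with hf
  have hfhg : f = h + g := by rw [hf, hh, hgdef, hNNT, Matrix.mulVecLin_add]
  have hdim : Module.finrank F (Fin k → F) = k := by simp [Module.finrank_pi]
  have e1 : Module.finrank F (LinearMap.range h) + ℓ = k := by
    have := LinearMap.finrank_range_add_finrank_ker h
    rw [hkerh, hdim] at this
    exact this
  have e2 : Module.finrank F (LinearMap.range f) + t = k := by
    have := LinearMap.finrank_range_add_finrank_ker f
    rw [hkerf, hdim] at this
    exact this
  have hsub : LinearMap.range h ≤ LinearMap.range f ⊔ LinearMap.range g := by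
    intro x hx
    obtain ⟨v, rfl⟩ := hx
    have hv : h v = f v - g v := by rw [hfhg]; simp
    rw [hv]
    exact sub_mem (Submodule.mem_sup_left ⟨v, rfl⟩) (Submodule.mem_sup_right ⟨v, rfl⟩)
  have e3 : Module.finrank F (LinearMap.range h) ≤
      Module.finrank F ((LinearMap.range f ⊔ LinearMap.range g : Submodule F (Fin k → F))) :=
    Submodule.finrank_mono hsub
  have e4 := Submodule.finrank_sup_add_finrank_inf_eq (LinearMap.range f) (LinearMap.range g)
  have hgle : LinearMap.range g ≤ LinearMap.range D.mulVecLin := by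
    rw [hgdef, Matrix.mulVecLin_mul]
    exact LinearMap.range_comp_le_range _ _
  have e5 : Module.finrank F (LinearMap.range g) ≤
      Module.finrank F (LinearMap.range D.mulVecLin) :=
    Submodule.finrank_mono hgle
  have e6 : Module.finrank F (LinearMap.range D.mulVecLin) ≤ s := by
    have := LinearMap.finrank_range_le D.mulVecLin
    simpa [Module.finrank_pi] using this
  have hrD : Module.finrank F (LinearMap.range D.mulVecLin) = s := by omega
  have hinf0 : Module.finrank F
      ((LinearMap.range f ⊓ LinearMap.range g : Submodule F (Fin k → F))) = 0 := by omega
  have hspos : 1 ≤ s := by omega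
  have hinfbot : (LinearMap.range f ⊓ LinearMap.range g : Submodule F (Fin k → F)) = ⊥ :=
    Submodule.finrank_eq_zero.mp hinf0
  have hrange_eq : LinearMap.range g = LinearMap.range D.mulVecLin :=
    Submodule.eq_of_le_of_finrank_le hgle (by omega)
  have hDinj : Function.Injective D.mulVecLin := by
    have h9 := LinearMap.finrank_range_add_finrank_ker D.mulVecLin
    rw [hrD] at h9
    have hdims : Module.finrank F (Fin s → F) = s := by simp [Module.finrank_pi]
    rw [hdims] at h9
    have hker0 : Module.finrank F (LinearMap.ker D.mulVecLin) = 0 := by omega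
    rw [← LinearMap.ker_eq_bot]
    exact Submodule.finrank_eq_zero.mp hker0
  set w := D *ᵥ (fun _ => (1:F)) with hwdef
  have hw0 : w ≠ 0 := by
    intro h0
    have h1 : (fun _ => (1:F)) = (0 : Fin s → F) := by
      apply hDinj
      rw [Matrix.mulVecLin_apply, Matrix.mulVecLin_apply, ← hwdef, h0, Matrix.mulVec_zero]
    have := congrFun h1 ⟨0, hspos⟩
    simpa using this
  have hwg : w ∈ LinearMap.range g := by
    rw [hrange_eq]
    exact ⟨fun _ => 1, by rw [Matrix.mulVecLin_apply]⟩
  have hwf : w ∉ LinearMap.range f := by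
    intro hwf
    have : w ∈ (⊥ : Submodule F (Fin k → F)) := hinfbot ▸ Submodule.mem_inf.mpr ⟨hwf, hwg⟩
    exact hw0 (by simpa using this)
  have hdualdim := finrank_dualE_add (LinearMap.ker f)
  rw [hkerf, Fintype.card_fin] at hdualdim
  have hfsym : (N * Nᵀ)ᵀ = N * Nᵀ := by rw [Matrix.transpose_mul, Matrix.transpose_transpose]
  have hrange_le : LinearMap.range f ≤ dualE (LinearMap.ker f) := by
    intro x hx
    obtain ⟨v, rfl⟩ := hx
    intro u hu
    have hu0 : (N * Nᵀ) *ᵥ u = 0 := by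
      rw [LinearMap.mem_ker, hf, Matrix.mulVecLin_apply] at hu
      exact hu
    have hvm : u ᵥ* (N * Nᵀ) = 0 := by
      rw [← Matrix.mulVec_transpose, hfsym, hu0]
    rw [hf, Matrix.mulVecLin_apply, Matrix.dotProduct_mulVec, hvm, zero_dotProduct]
  have hrangef_eq : LinearMap.range f = dualE (LinearMap.ker f) :=
    Submodule.eq_of_le_of_finrank_le hrange_le (by omega)
  have hnotdual : ¬ (∀ u ∈ LinearMap.ker f, u ⬝ᵥ w = 0) := by
    intro hall
    apply hwf
    rw [hrangef_eq]
    exact hall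
  push_neg at hnotdual
  obtain ⟨v, hvker, hvw⟩ := hnotdual
  have hterm1 : v ⬝ᵥ ((G' * G'ᵀ) *ᵥ v) = 0 := by
    rw [quad_eq_sq]
    have hyC : v ᵥ* G' ∈ C := by
      rw [vecMul_eq_sum_smul, ← hG'.2]
      exact Submodule.sum_mem _ fun i _ =>
        Submodule.smul_mem _ _ (Submodule.subset_span ⟨i, rfl⟩)
    rw [hsum0 _ hyC, mul_zero]
  have hterm2 : v ⬝ᵥ ((D * Dᵀ) *ᵥ v) = (v ⬝ᵥ w) * (v ⬝ᵥ w) := by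
    rw [quad_eq_sq]
    have : (v ᵥ* D) ⬝ᵥ (fun _ => (1:F)) = v ⬝ᵥ w := by
      rw [← Matrix.dotProduct_mulVec, ← hwdef]
    rw [this]
  have hv0 : (N * Nᵀ) *ᵥ v = 0 := by
    rw [LinearMap.mem_ker, hf, Matrix.mulVecLin_apply] at hvker
    exact hvker
  have hfinal : (0:F) = (v ⬝ᵥ w) * (v ⬝ᵥ w) := by
    calc (0:F) = v ⬝ᵥ ((N * Nᵀ) *ᵥ v) := by rw [hv0, dotProduct_zero]
      _ = v ⬝ᵥ ((G' * G'ᵀ) *ᵥ v) + v ⬝ᵥ ((D * Dᵀ) *ᵥ v) := by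
          rw [hNNT, Matrix.add_mulVec, dotProduct_add]
      _ = (v ⬝ᵥ w) * (v ⬝ᵥ w) := by rw [hterm1, hterm2, zero_add]
  exact hvw (mul_self_eq_zero.mp hfinal.symm)
end

section
/- Let q = 2^m. For every positive integer r there exists a 2r×(2r+1) matrix P over F_q such that P Pᵀ = diag(J, J, …, J) (r blocks), where J is the 2×2 matrix [[0,1],[1,0]]. Moreover P can be chosen so that, in addition, the product of P with the (2r+1)×2 all-ones matrix is the zero matrix. -/
open Matrix Finset

section Aux
variable {F : Type*} [Field F]

private lemma aux_sum_eq (n a : ℕ) (ha : a < n) :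
    (∑ l ∈ Finset.range n, if l = a then (1:F) else 0) = 1 := by
  rw [Finset.sum_ite_eq' (Finset.range n) a (fun _ => (1:F))]
  simp [ha]

private lemma aux_sum_ind (n a : ℕ) (ha : a < n) (f : ℕ → F) :
    (∑ l ∈ Finset.range n, (if l = a then (1:F) else 0) * f l) = f a := by
  have h : ∀ l ∈ Finset.range n, (if l = a then (1:F) else 0) * f l
      = if l = a then f l else 0 := by
    intro l _; split_ifs <;> simp
  rw [Finset.sum_congr rfl h, Finset.sum_ite_eq' (Finset.range n) a f]
  simp [ha]

private lemma aux_sum_le (n c : ℕ) :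
    (∑ l ∈ Finset.range n, if c ≤ l then (1:F) else 0) = ((n - c : ℕ) : F) := by
  induction n with
  | zero => simp
  | succ n ih =>
    rw [Finset.sum_range_succ, ih]
    by_cases h : c ≤ n
    · rw [if_pos h]
      have : n + 1 - c = (n - c) + 1 := by omega
      rw [this]; push_cast; ring
    · rw [if_neg h]
      have h1 : n - c = 0 := by omega
      have h2 : n + 1 - c = 0 := by omega
      rw [h1, h2]; simp

private lemma aux_sum_le_le (n c d : ℕ) :
    (∑ l ∈ Finset.range n, (if c ≤ l then (1:F) else 0) * (if d ≤ l then 1 else 0))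
      = ((n - max c d : ℕ) : F) := by
  rw [← aux_sum_le n (max c d)]
  refine Finset.sum_congr rfl fun l _ => ?_
  simp only [max_le_iff, ite_and]
  split_ifs <;> ring

end Aux

/-- Let `q = 2 ^ m`.  For every positive integer `r` there exists a
`2r × (2r+1)` matrix `P` over `F_q` with `P * Pᵀ = diag(J, …, J)` (`r` blocks
`J = [[0,1],[1,0]]`); moreover `P` can be chosen so that in addition
`P * 𝟏 = 0`, where `𝟏` is the `(2r+1) × 2` all-ones matrix. -/
theorem exists_matrix_mul_transpose_eq_J_blocks {F : Type*} [Field F] [Fintype F]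
    (m : ℕ) (hm : 0 < m) (hcard : Fintype.card F = 2 ^ m)
    (r : ℕ) (hr : 0 < r) :
    ∃ P : Matrix (Fin (2 * r)) (Fin (2 * r + 1)) F,
      P * Pᵀ = (Matrix.of fun (i j : Fin (2 * r)) =>
        if i ≠ j ∧ (i : ℕ) / 2 = (j : ℕ) / 2 then (1 : F) else 0) ∧
      P * (Matrix.of fun (_ : Fin (2 * r + 1)) (_ : Fin 2) => (1 : F)) = 0 := by
  have two0 : (2 : F) = 0 := by
    have h := FiniteField.cast_card_eq_zero F
    rw [hcard] at h
    push_cast at h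
    exact (pow_eq_zero_iff hm.ne').mp h
  have evenZero : ∀ k : ℕ, k % 2 = 0 → ((k : ℕ) : F) = 0 := by
    intro k hk
    obtain ⟨t, ht⟩ : ∃ t, k = 2 * t := ⟨k / 2, by omega⟩
    subst ht; push_cast; rw [two0]; ring
  set n := 2 * r + 1 with hn
  set g : ℕ → ℕ → F := fun i l =>
    if i % 2 = 0 then ((if l = i then (1:F) else 0) + (if l = i + 1 then 1 else 0))
    else (if i ≤ l then 1 else 0) with hg
  refine ⟨Matrix.of fun i j => g i j, ?_, ?_⟩
  · ext i j
    rw [Matrix.mul_apply]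
    simp only [transpose_apply, of_apply]
    rw [show (∑ l : Fin n, g i l * g j l)
        = ∑ l ∈ Finset.range n, g i l * g j l from Fin.sum_univ_eq_sum_range (fun l => g i l * g j l) n]
    have hi : (i : ℕ) < 2 * r := i.isLt
    have hj : (j : ℕ) < 2 * r := j.isLt
    simp only [ne_eq, Fin.ext_iff]
    by_cases hpi : (i : ℕ) % 2 = 0 <;> by_cases hpj : (j : ℕ) % 2 = 0
    · -- even, even
      simp only [hg, if_pos hpi, if_pos hpj]
      simp only [add_mul, mul_add, Finset.sum_add_distrib]
      have hb1 : (i:ℕ) < n := by omega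
      have hb2 : (i:ℕ) + 1 < n := by omega
      simp only [aux_sum_ind n (i:ℕ) hb1, aux_sum_ind n ((i:ℕ)+1) hb2]
      split_ifs <;> first | (exfalso; omega) | linear_combination two0 | linear_combination
    · -- even, odd
      simp only [hg, if_pos hpi, if_neg hpj]
      simp only [add_mul, Finset.sum_add_distrib]
      rw [aux_sum_ind n i (by omega) (fun l => if (j:ℕ) ≤ l then (1:F) else 0),
          aux_sum_ind n (i+1) (by omega) (fun l => if (j:ℕ) ≤ l then (1:F) else 0)]
      split_ifs <;> first | (exfalso; omega) | linear_combination two0 | linear_combination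
    · -- odd, even
      simp only [hg, if_neg hpi, if_pos hpj]
      have hcomm : ∀ l ∈ Finset.range n,
          (if (i:ℕ) ≤ l then (1:F) else 0) * ((if l = (j:ℕ) then (1:F) else 0) + (if l = (j:ℕ)+1 then 1 else 0))
          = (if l = (j:ℕ) then (1:F) else 0) * (if (i:ℕ) ≤ l then (1:F) else 0)
            + (if l = (j:ℕ)+1 then (1:F) else 0) * (if (i:ℕ) ≤ l then (1:F) else 0) := by
        intro l _; ring
      rw [Finset.sum_congr rfl hcomm, Finset.sum_add_distrib,
          aux_sum_ind n j (by omega) (fun l => if (i:ℕ) ≤ l then (1:F) else 0),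
          aux_sum_ind n (j+1) (by omega) (fun l => if (i:ℕ) ≤ l then (1:F) else 0)]
      split_ifs <;> first | (exfalso; omega) | linear_combination two0 | linear_combination
    · -- odd, odd
      simp only [hg, if_neg hpi, if_neg hpj]
      rw [aux_sum_le_le n i j, evenZero (n - max (i:ℕ) (j:ℕ)) (by omega)]
      rw [if_neg]
      rintro ⟨h1, h2⟩
      omega
  · ext i j
    rw [Matrix.mul_apply]
    simp only [of_apply, mul_one, Matrix.zero_apply]
    rw [show (∑ l : Fin n, g i l) = ∑ l ∈ Finset.range n, g i l from Fin.sum_univ_eq_sum_range (fun l => g i l) n]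
    have hi : (i : ℕ) < 2 * r := i.isLt
    by_cases hpi : (i : ℕ) % 2 = 0
    · simp only [hg, if_pos hpi, Finset.sum_add_distrib,
        aux_sum_eq n i (by omega), aux_sum_eq n ((i:ℕ)+1) (by omega)]
      linear_combination two0
    · simp only [hg, if_neg hpi]
      rw [aux_sum_le n i]
      exact evenZero (n - (i:ℕ)) (by omega)
end
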